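/- arXiv:2112.14674 — 5 statements merged into one kernel-verified Lean document; each statement's English description precedes it below -/
import Mathlib

section
/- Let X = (X^1,...,X^p) be a random vector taking values in {0,1,...,m}^p, let V : {0,...,m} → ℝ^m be given by V(x) = (1_{{1}}(x),...,1_{{m}}(x)), and let [Σ_XX]_v ∈ ℝ^{mp×mp} be the block matrix whose (i,j)-th m×m block is cov[V(X^i), V(X^j)]. Assume [Σ_XX]_v is invertible. Then, for any i ≠ j, X^i and X^j are additively conditionally independent given X^{−{i,j}} if and only if the (i,j)-th m×m block of the inverse matrix [Σ_XX]_v^{-1} is the zero matrix. -/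
/-!
In the coordinates given by the centred indicators `V(X^k)_a - E V(X^k)_a`, every mean-zero
`φ(X^k)` is a combination of the indicators of block `k`, so `𝒜_{X^A}` is the image of the vectors
supported on the blocks in `A`, and the `L²(P)` inner product becomes `⟨w, u⟩ = wᵀ Σ u` with
`Σ = [Σ_XX]_v` positive definite. In this geometry let `P`, `Q` be the vectors vanishing on block
`j`, resp. `i`. Additive conditional independence says `P ⊖ (P ⊓ Q) ⟂ Q ⊖ (P ⊓ Q)`; as `P ⊔ Q` is
the whole space, this is equivalent to `Pᗮ ⟂ Qᗮ`. Finally `Pᗮ` and `Qᗮ` are the images under `Σ⁻¹`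
of the vectors supported on block `j`, resp. `i`, and the inner products between them are the
entries of the `(i, j)` block of `Σ⁻¹`.
-/

open MeasureTheory

noncomputable section

/-- Expectation of a real-valued random variable. -/
def expec {Ω : Type*} [MeasurableSpace Ω] (μ : Measure Ω) (f : Ω → ℝ) : ℝ := ∫ ω, f ω ∂μ

/-- Covariance of two real-valued random variables. -/
def covRV {Ω : Type*} [MeasurableSpace Ω] (μ : Measure Ω) (f g : Ω → ℝ) : ℝ :=
  expec μ (fun ω => f ω * g ω) - expec μ f * expec μ g

/-- The additive space `𝒜_{X^A}`: the linear span (inside the functions on `Ω`) of the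
mean-zero functions of the single coordinates `X^k`, `k ∈ A`. -/
def addSpace {Ω ι α : Type*} [MeasurableSpace Ω] (μ : Measure Ω)
    (X : Ω → ι → α) (A : Set ι) : Submodule ℝ (Ω → ℝ) :=
  Submodule.span ℝ {f | ∃ k ∈ A, ∃ φ : α → ℝ,
    expec μ (fun ω => φ (X ω k)) = 0 ∧ f = fun ω => φ (X ω k)}

/-- Additive conditional independence of `X^A` and `X^B` given `X^C`:
`(𝒜_A + 𝒜_C) ⊖ 𝒜_C` is orthogonal in `L²(P)` to `(𝒜_B + 𝒜_C) ⊖ 𝒜_C`. -/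
def ACI {Ω ι α : Type*} [MeasurableSpace Ω] (μ : Measure Ω)
    (X : Ω → ι → α) (A B C : Set ι) : Prop :=
  ∀ f ∈ addSpace μ X (A ∪ C),
    (∀ h ∈ addSpace μ X C, expec μ (fun ω => f ω * h ω) = 0) →
  ∀ g ∈ addSpace μ X (B ∪ C),
    (∀ h ∈ addSpace μ X C, expec μ (fun ω => g ω * h ω) = 0) →
      expec μ (fun ω => f ω * g ω) = 0

/-- Conditional independence of the coordinates `X^i` and `X^j` given the remaining
coordinates `X^{-{i,j}}`, expressed by the standard factorization of the joint law of
discrete variables. -/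
def CIpair {Ω ι α : Type*} [MeasurableSpace Ω] (μ : Measure Ω)
    (X : Ω → ι → α) (i j : ι) : Prop :=
  ∀ (a b : α) (z : ι → α),
    μ {ω | X ω i = a ∧ X ω j = b ∧ ∀ k, k ≠ i → k ≠ j → X ω k = z k} *
      μ {ω | ∀ k, k ≠ i → k ≠ j → X ω k = z k} =
    μ {ω | X ω i = a ∧ ∀ k, k ≠ i → k ≠ j → X ω k = z k} *
      μ {ω | X ω j = b ∧ ∀ k, k ≠ i → k ≠ j → X ω k = z k}

/-- The indicator vector `V(x) = (1_{{1}}(x), …, 1_{{m}}(x))` of a value in `{0,1,…,m}`. -/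
def Vfun {m : ℕ} (x : Fin (m + 1)) : Fin m → ℝ :=
  fun a => if (x : ℕ) = (a : ℕ) + 1 then 1 else 0

open Matrix RealInnerProductSpace

section Supported

variable {ι : Type*} (R : Type*) [Semiring R]

def supportedOn (s : Set ι) : Submodule R (ι → R) where
  carrier := {v | ∀ i ∉ s, v i = 0}
  add_mem' hv hw i hi := by simp [hv i hi, hw i hi]
  zero_mem' _ _ := rfl
  smul_mem' c v hv i hi := by simp [hv i hi]

variable {R} {s t : Set ι}

@[simp]
lemma mem_supportedOn {v : ι → R} : v ∈ supportedOn R s ↔ ∀ i ∉ s, v i = 0 := Iff.rfl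

lemma supportedOn_univ : supportedOn R (Set.univ : Set ι) = ⊤ :=
  eq_top_iff.mpr fun _ _ i hi => absurd (Set.mem_univ i) hi

lemma supportedOn_inf : supportedOn R s ⊓ supportedOn R t = supportedOn R (s ∩ t) := by
  ext v
  simp only [Submodule.mem_inf, mem_supportedOn, Set.mem_inter_iff]
  grind

lemma supportedOn_sup : supportedOn R s ⊔ supportedOn R t = supportedOn R (s ∪ t) := by
  classical
  refine le_antisymm (sup_le (fun v hv i hi => hv i fun h => hi (.inl h))
    fun v hv i hi => hv i fun h => hi (.inr h)) fun v hv => Submodule.mem_sup.mpr ?_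
  refine ⟨s.indicator v, fun i hi => Set.indicator_of_notMem hi v,
    sᶜ.indicator v, fun i hi => ?_, s.indicator_self_add_compl v⟩
  by_cases his : i ∈ s
  · exact Set.indicator_of_notMem (Set.notMem_compl_iff.mpr his) v
  · simp [hv i (by simp [his, hi])]

lemma forall_supportedOn_dotProduct_eq_zero_iff [Fintype ι] [DecidableEq ι] {z : ι → R} :
    (∀ v ∈ supportedOn R s, z ⬝ᵥ v = 0) ↔ ∀ i ∈ s, z i = 0 := by
  refine ⟨fun h i hi => ?_, fun h v hv => Finset.sum_eq_zero fun i _ => ?_⟩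
  · simpa using h (Pi.single i 1) fun j hj => Pi.single_eq_of_ne (by rintro rfl; exact hj hi) _
  · by_cases hi : i ∈ s
    · simp [h i hi]
    · simp [hv i hi]

end Supported

lemma span_image_eq_map_supportedOn {ι R M : Type*} [Fintype ι] [Semiring R] [AddCommMonoid M]
    [Module R M] (v : ι → M) (s : Set ι) :
    Submodule.span R (v '' s) = (supportedOn R s).map (Fintype.linearCombination R v) := by
  classical
  apply le_antisymm
  · rw [Submodule.span_le]
    rintro _ ⟨i, hi, rfl⟩
    exact ⟨Pi.single i 1, fun j hj => Pi.single_eq_of_ne (by rintro rfl; exact hj hi) _,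
      by simp [Fintype.linearCombination_apply_single]⟩
  · rintro _ ⟨w, hw, rfl⟩
    rw [Fintype.linearCombination_apply]
    refine Submodule.sum_mem _ fun i _ => ?_
    by_cases hi : i ∈ s
    · exact Submodule.smul_mem _ _ (Submodule.subset_span ⟨i, hi, rfl⟩)
    · simp [hw i hi]

lemma Matrix.forall_supportedOn_dotProduct_mulVec_eq_zero_iff {ι κ R : Type*} [CommSemiring R]
    [Fintype ι] [DecidableEq ι] [Fintype κ] [DecidableEq κ] {s : Set ι} {t : Set κ}
    (M : Matrix ι κ R) :
    (∀ x ∈ supportedOn R s, ∀ y ∈ supportedOn R t, x ⬝ᵥ M *ᵥ y = 0) ↔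
      ∀ a ∈ s, ∀ b ∈ t, M a b = 0 := by
  have hcol : ∀ b, (∀ x ∈ supportedOn R s, (x ᵥ* M) b = 0) ↔ ∀ a ∈ s, M a b = 0 := fun b => by
    simp_rw [Matrix.vecMul, dotProduct_comm _ (fun a => M a b)]
    exact forall_supportedOn_dotProduct_eq_zero_iff
  simp_rw [Matrix.dotProduct_mulVec, forall_supportedOn_dotProduct_eq_zero_iff]
  exact ⟨fun h a ha b hb => (hcol b).1 (fun x hx => h x hx b hb) a ha,
    fun h x hx b hb => (hcol b).2 (fun a ha => h a ha b hb) x hx⟩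

namespace Submodule

variable {E : Type*} [NormedAddCommGroup E] [InnerProductSpace ℝ E]

lemma real_inner_starProjection_self (K : Submodule ℝ E) [K.HasOrthogonalProjection] (v : E) :
    ⟪K.starProjection v, v⟫ = ‖K.starProjection v‖ ^ 2 := by
  simpa using K.re_inner_starProjection_eq_normSq v

theorem isOrtho_sup_inf_orthogonal_iff {F G : Submodule ℝ E} [F.HasOrthogonalProjection]
    [G.HasOrthogonalProjection] (hFG : F ⊓ G = ⊥) :
    ((F ⊔ G) ⊓ Gᗮ) ⟂ ((F ⊔ G) ⊓ Fᗮ) ↔ F ⟂ G := by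
  refine ⟨fun h => ?_, fun h => ?_⟩
  · -- Testing `h` on `a - P_G a` and `b - P_F b` shows `⟪a, b⟫ = ⟪P_G a, P_F b⟫`; for
    -- `a = P_F b` this gives `‖P_G a‖ = ‖a‖`, so `P_F b ∈ F ⊓ G = ⊥`.
    have key : ∀ a ∈ F, ∀ b ∈ G, ⟪a, b⟫ = ⟪G.starProjection a, F.starProjection b⟫ := by
      intro a ha b hb
      have hf : a - G.starProjection a ∈ (F ⊔ G) ⊓ Gᗮ :=
        ⟨sub_mem (mem_sup_left ha) (mem_sup_right (G.starProjection_apply_mem a)),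
          G.sub_starProjection_mem_orthogonal a⟩
      have hg : b - F.starProjection b ∈ (F ⊔ G) ⊓ Fᗮ :=
        ⟨sub_mem (mem_sup_right hb) (mem_sup_left (F.starProjection_apply_mem b)),
          F.sub_starProjection_mem_orthogonal b⟩
      have h0 := h.inner_eq hf hg
      have hb' : ⟪a - G.starProjection a, b⟫ = 0 := inner_left_of_mem_orthogonal hb hf.2
      have ha' : ⟪a, F.starProjection b⟫ = ⟪a, b⟫ := by
        rw [← inner_starProjection_left_eq_right, starProjection_eq_self_iff.mpr ha]
      rw [inner_sub_right, hb', zero_sub, inner_sub_left, ha', neg_eq_zero, sub_eq_zero] at h0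
      exact h0
    have hproj : ∀ b ∈ G, F.starProjection b = 0 := by
      intro b hb
      have hcF : F.starProjection b ∈ F := F.starProjection_apply_mem b
      have hnorm : ‖F.starProjection b‖ ^ 2 = ‖G.starProjection (F.starProjection b)‖ ^ 2 :=
        calc ‖F.starProjection b‖ ^ 2 = ⟪F.starProjection b, b⟫ :=
              (real_inner_starProjection_self F b).symm
          _ = ⟪G.starProjection (F.starProjection b), F.starProjection b⟫ := key _ hcF b hb
          _ = _ := real_inner_starProjection_self G _
      have hcG : F.starProjection b ∈ G := (G.mem_iff_norm_starProjection _).mpr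
        ((pow_left_inj₀ (norm_nonneg _) (norm_nonneg _) two_ne_zero).mp hnorm).symm
      have hc : F.starProjection b ∈ F ⊓ G := ⟨hcF, hcG⟩
      rwa [hFG, mem_bot] at hc
    rw [isOrtho_iff_inner_eq]
    intro a ha b hb
    rw [key a ha b hb, hproj b hb, inner_zero_right]
  · rw [isOrtho_iff_inner_eq]
    rintro f ⟨hf, hfG⟩ g ⟨-, hgF⟩
    obtain ⟨a, ha, b, hb, rfl⟩ := mem_sup.mp hf
    have hb0 : b = 0 := by
      have hself := inner_left_of_mem_orthogonal hb hfG
      rwa [inner_add_left, h.inner_eq ha hb, zero_add, inner_self_eq_zero] at hself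
    rw [hb0, add_zero]
    exact inner_right_of_mem_orthogonal ha hgF

theorem isOrtho_inf_orthogonal_inf_iff [FiniteDimensional ℝ E] {P Q : Submodule ℝ E}
    (hPQ : P ⊔ Q = ⊤) : (P ⊓ (P ⊓ Q)ᗮ) ⟂ (Q ⊓ (P ⊓ Q)ᗮ) ↔ Pᗮ ⟂ Qᗮ := by
  have hsup : Qᗮ ⊔ Pᗮ = (P ⊓ Q)ᗮ := by
    rw [← orthogonal_orthogonal (Qᗮ ⊔ Pᗮ), ← inf_orthogonal, orthogonal_orthogonal,
      orthogonal_orthogonal, inf_comm]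
  have hinf : Qᗮ ⊓ Pᗮ = ⊥ := by
    rw [inf_orthogonal, sup_comm, hPQ, top_orthogonal_eq_bot]
  rw [isOrtho_comm (U := Pᗮ), ← isOrtho_sup_inf_orthogonal_iff hinf, hsup,
    orthogonal_orthogonal, orthogonal_orthogonal, inf_comm P, inf_comm Q]

end Submodule

namespace Matrix.PosDef

variable {n : Type*} [Fintype n] [DecidableEq n] {S : Matrix n n ℝ}

theorem isOrtho_relative_complements_iff_inv_apply_eq_zero (hS : S.PosDef) {s t : Set n}
    (hst : s ∪ t = Set.univ) :
    (∀ w ∈ supportedOn ℝ s, (∀ v ∈ supportedOn ℝ (s ∩ t), w ⬝ᵥ S *ᵥ v = 0) →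
      ∀ u ∈ supportedOn ℝ t, (∀ v ∈ supportedOn ℝ (s ∩ t), u ⬝ᵥ S *ᵥ v = 0) →
        w ⬝ᵥ S *ᵥ u = 0) ↔
      ∀ a ∉ t, ∀ b ∉ s, S⁻¹ a b = 0 := by
  let _ : NormedAddCommGroup (n → ℝ) := S.toNormedAddCommGroup hS
  -- without this, instance search would find the sup norm of `Pi` instead
  let _ : SeminormedAddCommGroup (n → ℝ) := S.toSeminormedAddCommGroup hS.posSemidef
  let _ : InnerProductSpace ℝ (n → ℝ) := S.toInnerProductSpace hS.posSemidef
  have hinner : ∀ x y : n → ℝ, ⟪x, y⟫ = x ⬝ᵥ S *ᵥ y := fun x y => by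
    show (S *ᵥ y) ⬝ᵥ star x = _
    rw [star_trivial, dotProduct_comm]
  have hmem : ∀ (r : Set n) (y : n → ℝ), y ∈ (supportedOn ℝ r)ᗮ ↔ ∀ i ∈ r, (S *ᵥ y) i = 0 :=
    fun r y => by
      rw [Submodule.mem_orthogonal, ← forall_supportedOn_dotProduct_eq_zero_iff]
      exact forall₂_congr fun u _ => by rw [hinner, dotProduct_comm]
  have hdet : IsUnit S.det := (isUnit_iff_isUnit_det S).mp hS.isUnit
  have horth : ∀ r : Set n, (supportedOn ℝ r)ᗮ = (supportedOn ℝ rᶜ).map S⁻¹.mulVecLin := by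
    intro r
    ext x
    rw [hmem, Submodule.mem_map]
    constructor
    · intro hx
      exact ⟨S *ᵥ x, fun i hi => hx i (by simpa using hi),
        by simp [mulVec_mulVec, nonsing_inv_mul _ hdet]⟩
    · rintro ⟨y, hy, rfl⟩ i hi
      simpa [mulVec_mulVec, mul_nonsing_inv _ hdet] using hy i (by simpa using hi)
  calc _ ↔ (supportedOn ℝ s ⊓ (supportedOn ℝ s ⊓ supportedOn ℝ t)ᗮ) ⟂
        (supportedOn ℝ t ⊓ (supportedOn ℝ s ⊓ supportedOn ℝ t)ᗮ) := by
        simp only [Submodule.isOrtho_iff_inner_eq, Submodule.mem_inf, Submodule.mem_orthogonal',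
          supportedOn_inf, hinner, and_imp]
    _ ↔ (supportedOn ℝ s)ᗮ ⟂ (supportedOn ℝ t)ᗮ :=
        Submodule.isOrtho_inf_orthogonal_inf_iff (by rw [supportedOn_sup, hst, supportedOn_univ])
    _ ↔ ∀ a ∉ t, ∀ b ∉ s, S⁻¹ a b = 0 := by
        rw [Submodule.isOrtho_iff_inner_eq, horth, horth]
        simp only [Submodule.mem_map, forall_exists_index, and_imp, forall_apply_eq_imp_iff₂,
          hinner, mulVecLin_apply, mulVec_mulVec, mul_nonsing_inv _ hdet, one_mulVec]
        rw [forall₂_comm]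
        simp_rw [dotProduct_comm (S⁻¹ *ᵥ _), forall_supportedOn_dotProduct_mulVec_eq_zero_iff]
        simp only [Set.mem_compl_iff]

end Matrix.PosDef

lemma Vfun_eq_ite {m : ℕ} (x : Fin (m + 1)) (a : Fin m) :
    Vfun x a = if x = a.succ then 1 else 0 := by
  simp [Vfun, Fin.ext_iff]

lemma eq_add_sum_mul_Vfun {m : ℕ} (φ : Fin (m + 1) → ℝ) (x : Fin (m + 1)) :
    φ x = φ 0 + ∑ a, (φ a.succ - φ 0) * Vfun x a := by
  cases x using Fin.cases with
  | zero => simp [Vfun_eq_ite, (Fin.succ_ne_zero _).symm]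
  | succ b => simp [Vfun_eq_ite]

open ProbabilityTheory

section Indicators

variable {Ω : Type*} [MeasurableSpace Ω] (μ : Measure Ω) {p m : ℕ}
  (X : Ω → Fin p → Fin (m + 1))

def centeredIndicator (q : Fin p × Fin m) (ω : Ω) : ℝ :=
  Vfun (X ω q.1) q.2 - μ[fun ω => Vfun (X ω q.1) q.2]

def indicatorCov : Matrix (Fin p × Fin m) (Fin p × Fin m) ℝ :=
  fun q r => cov[fun ω => Vfun (X ω q.1) q.2, fun ω => Vfun (X ω r.1) r.2; μ]

variable [IsProbabilityMeasure μ] {X} (hX : ∀ k, Measurable fun ω => X ω k)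
include hX

lemma memLp_Vfun (k : Fin p) (a : Fin m) : MemLp (fun ω => Vfun (X ω k) a) 2 μ :=
  MemLp.comp_of_map (g := fun x => Vfun x a) .of_discrete (hX k).aemeasurable

lemma integrable_Vfun (k : Fin p) (a : Fin m) : Integrable (fun ω => Vfun (X ω k) a) μ :=
  (memLp_Vfun μ hX k a).integrable one_le_two

lemma integral_centeredIndicator (q : Fin p × Fin m) : μ[centeredIndicator μ X q] = 0 := by
  simp [centeredIndicator, integral_sub (integrable_Vfun μ hX q.1 q.2)]

lemma comp_eq_sum_smul_centeredIndicator (k : Fin p) (φ : Fin (m + 1) → ℝ)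
    (hφ : expec μ (fun ω => φ (X ω k)) = 0) :
    (fun ω => φ (X ω k)) = ∑ a, (φ a.succ - φ 0) • centeredIndicator μ X (k, a) := by
  have hdecomp : (fun ω => φ (X ω k)) = fun ω => φ 0 + ∑ a, (φ a.succ - φ 0) * Vfun (X ω k) a :=
    funext fun ω => eq_add_sum_mul_Vfun φ (X ω k)
  have hint := integrable_Vfun μ hX k
  have hmean : φ 0 + ∑ a, (φ a.succ - φ 0) * μ[fun ω => Vfun (X ω k) a] = 0 := by
    rw [← hφ, hdecomp, expec, integral_add (integrable_const _)
      (integrable_finsetSum _ fun a _ => (hint a).const_mul _), integral_finsetSum _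
      fun a _ => (hint a).const_mul _]
    simp [integral_const_mul]
  funext ω
  simp only [Finset.sum_apply, Pi.smul_apply, smul_eq_mul, centeredIndicator, mul_sub,
    Finset.sum_sub_distrib]
  linarith [eq_add_sum_mul_Vfun φ (X ω k)]

lemma addSpace_eq_span (A : Set (Fin p)) :
    addSpace μ X A = Submodule.span ℝ (centeredIndicator μ X '' (Prod.fst ⁻¹' A)) := by
  apply le_antisymm
  · rw [addSpace, Submodule.span_le]
    rintro _ ⟨k, hk, φ, hφ, rfl⟩
    rw [SetLike.mem_coe, comp_eq_sum_smul_centeredIndicator μ hX k φ hφ]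
    exact Submodule.sum_mem _ fun a _ =>
      Submodule.smul_mem _ _ (Submodule.subset_span ⟨(k, a), hk, rfl⟩)
  · rw [Submodule.span_le]
    rintro _ ⟨q, hq, rfl⟩
    exact Submodule.subset_span ⟨q.1, hq, fun x => Vfun x q.2 - μ[fun ω => Vfun (X ω q.1) q.2],
      by exact integral_centeredIndicator μ hX q, rfl⟩

lemma addSpace_eq_map (A : Set (Fin p)) :
    addSpace μ X A = (supportedOn ℝ (Prod.fst ⁻¹' A)).map
      (Fintype.linearCombination ℝ (centeredIndicator μ X)) := by
  rw [addSpace_eq_span μ hX, span_image_eq_map_supportedOn]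

lemma expec_linearCombination_mul (w u : Fin p × Fin m → ℝ) :
    expec μ (fun ω => Fintype.linearCombination ℝ (centeredIndicator μ X) w ω *
      Fintype.linearCombination ℝ (centeredIndicator μ X) u ω) = w ⬝ᵥ indicatorCov μ X *ᵥ u := by
  have hmemLp : ∀ (c : ℝ) q, MemLp (c • centeredIndicator μ X q) 2 μ := fun c q =>
    ((memLp_Vfun μ hX q.1 q.2).sub (memLp_const _)).const_smul c
  have hmean : ∀ w, μ[Fintype.linearCombination ℝ (centeredIndicator μ X) w] = 0 := fun w => by
    simp only [Fintype.linearCombination_apply, Finset.sum_apply]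
    rw [integral_finsetSum _ fun q _ => ((hmemLp (w q) q).integrable one_le_two)]
    simp [integral_const_mul, integral_centeredIndicator μ hX]
  have hcov : ∀ q r,
      cov[centeredIndicator μ X q, centeredIndicator μ X r; μ] = indicatorCov μ X q r :=
    fun q r => (covariance_sub_const_left (integrable_Vfun μ hX q.1 q.2) _).trans
      (covariance_sub_const_right (integrable_Vfun μ hX r.1 r.2) _)
  calc _ = cov[Fintype.linearCombination ℝ (centeredIndicator μ X) w,
          Fintype.linearCombination ℝ (centeredIndicator μ X) u; μ] := by
        simp [covariance, hmean, expec]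
    _ = ∑ q, ∑ r, cov[w q • centeredIndicator μ X q, u r • centeredIndicator μ X r; μ] := by
        simp only [Fintype.linearCombination_apply]
        exact covariance_sum_sum (fun q => hmemLp _ q) (fun r => hmemLp _ r)
    _ = w ⬝ᵥ indicatorCov μ X *ᵥ u := by
        simp only [covariance_smul_left, covariance_smul_right, hcov, dotProduct, mulVec,
          Finset.mul_sum]
        exact Finset.sum_congr rfl fun _ _ => Finset.sum_congr rfl fun _ _ => by ring

lemma posSemidef_indicatorCov : (indicatorCov μ X).PosSemidef := by
  refine Matrix.posSemidef_iff_dotProduct_mulVec.mpr ⟨?_, fun x => ?_⟩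
  · exact Matrix.IsHermitian.ext fun q r => by simp [indicatorCov, covariance_comm]
  · rw [star_trivial, ← expec_linearCombination_mul μ hX]
    exact integral_nonneg fun ω => mul_self_nonneg _

lemma aci_iff (A B C : Set (Fin p)) :
    ACI μ X A B C ↔
      ∀ w ∈ supportedOn ℝ (Prod.fst ⁻¹' (A ∪ C)),
        (∀ v ∈ supportedOn ℝ (Prod.fst ⁻¹' C), w ⬝ᵥ indicatorCov μ X *ᵥ v = 0) →
      ∀ u ∈ supportedOn ℝ (Prod.fst ⁻¹' (B ∪ C)),
        (∀ v ∈ supportedOn ℝ (Prod.fst ⁻¹' C), u ⬝ᵥ indicatorCov μ X *ᵥ v = 0) →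
      w ⬝ᵥ indicatorCov μ X *ᵥ u = 0 := by
  simp only [ACI, addSpace_eq_map μ hX, Submodule.mem_map, forall_exists_index, and_imp,
    forall_apply_eq_imp_iff₂, expec_linearCombination_mul μ hX]

end Indicators

lemma covRV_eq_covariance {Ω : Type*} [MeasurableSpace Ω] {μ : Measure Ω}
    [IsProbabilityMeasure μ] {f g : Ω → ℝ} (hf : MemLp f 2 μ) (hg : MemLp g 2 μ) :
    covRV μ f g = cov[f, g; μ] :=
  (covariance_eq_sub hf hg).symm

/-- for a discrete random vector with invertible blockwise indicator
covariance matrix `[Σ_XX]_v`, additive conditional independence of `X^i` and `X^j` given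
the remaining coordinates holds iff the `(i,j)`-th `m×m` block of `([Σ_XX]_v)⁻¹` is zero. -/
theorem stmt1 {Ω : Type*} [MeasurableSpace Ω] (μ : Measure Ω) [IsProbabilityMeasure μ]
    (p m : ℕ) (X : Ω → Fin p → Fin (m + 1)) (hX : ∀ k, Measurable fun ω => X ω k)
    (Sv : Matrix (Fin p × Fin m) (Fin p × Fin m) ℝ)
    (hSv : ∀ i j a b, Sv (i, a) (j, b) =
      covRV μ (fun ω => Vfun (X ω i) a) (fun ω => Vfun (X ω j) b))
    (hinv : IsUnit Sv) (i j : Fin p) (hij : i ≠ j) :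
    ACI μ X {i} {j} ({i, j}ᶜ : Set (Fin p)) ↔
      ∀ a b : Fin m, Sv⁻¹ (i, a) (j, b) = 0 := by
  obtain rfl : Sv = indicatorCov μ X := Matrix.ext fun q r =>
    (hSv _ _ _ _).trans (covRV_eq_covariance (memLp_Vfun μ hX _ _) (memLp_Vfun μ hX _ _))
  have hPD := (posSemidef_indicatorCov μ hX).posDef_iff_isUnit.mpr hinv
  have hC : (Prod.fst ⁻¹' {i, j}ᶜ : Set (Fin p × Fin m)) =
      Prod.fst ⁻¹' ({i} ∪ {i, j}ᶜ) ∩ Prod.fst ⁻¹' ({j} ∪ {i, j}ᶜ) := by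
    ext; grind
  have hcover : (Prod.fst ⁻¹' ({i} ∪ {i, j}ᶜ) ∪ Prod.fst ⁻¹' ({j} ∪ {i, j}ᶜ) :
      Set (Fin p × Fin m)) = Set.univ := by
    ext; grind
  have hi : ∀ q : Fin p × Fin m, q ∉ Prod.fst ⁻¹' ({j} ∪ {i, j}ᶜ) ↔ q.1 = i := by
    intro q; grind
  have hj : ∀ q : Fin p × Fin m, q ∉ Prod.fst ⁻¹' ({i} ∪ {i, j}ᶜ) ↔ q.1 = j := by
    intro q; grind
  rw [aci_iff μ hX, hC, hPD.isOrtho_relative_complements_iff_inv_apply_eq_zero hcover]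
  simp only [hi, hj]
  exact ⟨fun h a b => h (i, a) rfl (j, b) rfl, by rintro h ⟨k, a⟩ rfl ⟨l, b⟩ rfl; exact h a b⟩
end
end

section
/- Let X = (X^1,...,X^p) ∈ {−1,1}^p, p ≥ 3, follow a symmetric Ising model with respect to the graph G = (V, E). Fix a pair i ≠ j. If there exists an (i,j)-separator R on G with |R| ≤ 2, then conditional independence of X^i and X^j given X^{−{i,j}} implies that X^i and X^j are additively conditionally independent given X^{−{i,j}}. -/
open MeasureTheory

noncomputable section

/-- Adjacency relation of the reduced graph obtained from `E` by removing the edge `(i,j)`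
(in both directions) and all edges between `R` and its complement. -/
def reducedAdj {ι : Type*} (E : Set (ι × ι)) (i j : ι) (R : Set ι) : ι → ι → Prop :=
  fun k l => (k, l) ∈ E ∧ ¬(k = i ∧ l = j) ∧ ¬(k = j ∧ l = i) ∧ (k ∈ R ↔ l ∈ R)

/-- `R ⊆ V ∖ {i,j}` is an `(i,j)`-separator: in the reduced graph, `i` and `j` lie in
distinct connected components, i.e. `j` is not reachable from `i`. -/
def IsSeparator {ι : Type*} (E : Set (ι × ι)) (i j : ι) (R : Set ι) : Prop :=
  i ∉ R ∧ j ∉ R ∧ ¬ Relation.ReflTransGen (reducedAdj E i j R) i j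

/-- The node set of the connected component of `k` in the reduced graph. -/
def component {ι : Type*} (E : Set (ι × ι)) (i j : ι) (R : Set ι) (k : ι) : Set ι :=
  {l | Relation.ReflTransGen (reducedAdj E i j R) k l}

/-- A real-valued node variable `X^k` has linear conditional mean with respect to `X^D`:
either `D = ∅`, or there is `ξ ∈ ℝ^D` with `E(X^k − E X^k | X^D) = ξᵀ (X^D − E X^D)` a.s.
(stated via integration over each event `{X^D = z}`). -/
def LinCondMean {Ω ι : Type*} [MeasurableSpace Ω] [Fintype ι] (μ : MeasureTheory.Measure Ω)
    (X : Ω → ι → ℝ) (k : ι) (D : Set ι) : Prop :=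
  D = ∅ ∨ ∃ ξ : ι → ℝ, (∀ d, d ∉ D → ξ d = 0) ∧ ∀ z : ι → ℝ,
    (∫ ω in {ω | ∀ d ∈ D, X ω d = z d}, (X ω k - expec μ fun ω' => X ω' k) ∂μ) =
      (∑ d : ι, ξ d * (z d - expec μ fun ω' => X ω' d)) *
        (μ {ω | ∀ d ∈ D, X ω d = z d}).toReal

/-- The `±1` vector associated with a Boolean configuration. -/
def signVec {p : ℕ} (s : Fin p → Bool) : Fin p → ℝ := fun k => if s k then 1 else -1

/-- The (unnormalized) symmetric Ising weight `exp(Σ_{i<j} β_{ij} x^i x^j)`. -/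
def isingWeight {p : ℕ} (β : Matrix (Fin p) (Fin p) ℝ) (x : Fin p → ℝ) : ℝ :=
  Real.exp (∑ i : Fin p, ∑ j : Fin p, if i < j then β i j * x i * x j else 0)

/-- The partition function of the symmetric Ising model. -/
def isingZ {p : ℕ} (β : Matrix (Fin p) (Fin p) ℝ) : ℝ :=
  ∑ s : Fin p → Bool, isingWeight β (signVec s)

/-- `X` follows the symmetric Ising model with parameter `β` (symmetric, zero diagonal):
`X` takes values in `{−1,1}^p` and has p.m.f. `z(β)⁻¹ exp(Σ_{i<j} β_{ij} x^i x^j)`. -/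
def IsSymIsing {Ω : Type*} [MeasurableSpace Ω] (μ : MeasureTheory.Measure Ω) {p : ℕ}
    (X : Ω → Fin p → ℝ) (β : Matrix (Fin p) (Fin p) ℝ) : Prop :=
  β.IsSymm ∧ (∀ i, β i i = 0) ∧ (∀ ω k, X ω k = 1 ∨ X ω k = -1) ∧
    ∀ s : Fin p → Bool,
      μ {ω | ∀ k, X ω k = signVec s k} =
        ENNReal.ofReal (isingWeight β (signVec s) / isingZ β)

/-- The edge set of the (symmetric) Ising model: `(i,j) ∈ E` iff `i ≠ j` and `β_{ij} ≠ 0`. -/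
def isingEdges {p : ℕ} (β : Matrix (Fin p) (Fin p) ℝ) : Set (Fin p × Fin p) :=
  {e | e.1 ≠ e.2 ∧ β e.1 e.2 ≠ 0}

/-!
If `X^i ⊥⊥ X^j | X^{-ij}`, then `β_ij = 0`: the cross-ratio of the four configurations that are
`+1` off `{i, j}` equals `exp (4 β_ij)`. A centred function of a symmetric `±1` variable is a
multiple of it, so every element of an additive space is linear in `X`, and additive conditional
independence becomes `cᵀ M d = 0` for the second-moment matrix `M`, given `c_j = d_i = 0` and
`(M c)_l = (M d)_l = 0` for `l ∉ {i, j}`.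

Let `S_i`, `S_j` be the components of `i`, `j` in the reduced graph. Without the edge `(i,j)` the
Ising weight factorizes across `R`, so `X^{S_i}` and the coordinates off `S_i ∪ R` are
conditionally independent given `X^R`; and `E[X^k | X^R]` is odd in `X^R`, hence linear when
`|R| ≤ 2`. So the residuals `X^k - E[X^k | X^R]`, `k ∈ S_i`, are uncorrelated with every coordinate
off `S_i`. As `M` is positive semidefinite, this gives `M c = M a` for a combination `a` of these
residuals, and likewise `M d = M b` with `b` supported on `S_j ∪ R`, which misses `S_i`; hence
`cᵀ M d = aᵀ M b = 0`.
-/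

open Finset Matrix

section Configurations

open scoped Classical

variable {p : ℕ}

lemma signVec_compl (s : Fin p → Bool) : signVec sᶜ = -signVec s := by
  funext k; cases h : s k <;> simp [signVec, h]

lemma signVec_eq_one_iff {s : Fin p → Bool} {k : Fin p} : signVec s k = 1 ↔ s k = true := by
  cases h : s k <;> norm_num [signVec, h]

lemma signVec_injective : Function.Injective (signVec : (Fin p → Bool) → Fin p → ℝ) := by
  intro s t h
  funext k
  have := congrFun h k
  cases hs : s k <;> cases ht : t k <;> simp_all [signVec] <;> norm_num at this

def cylinderOn (R : Set (Fin p)) (r : Fin p → Bool) : Finset (Fin p → Bool) :=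
  {s | Set.EqOn s r R}

@[simp]
lemma mem_cylinderOn {R : Set (Fin p)} {r s : Fin p → Bool} :
    s ∈ cylinderOn R r ↔ Set.EqOn s r R := by
  simp [cylinderOn]

lemma cylinderOn_congr {R : Set (Fin p)} {r r' : Fin p → Bool} (h : Set.EqOn r r' R) :
    cylinderOn R r = cylinderOn R r' := by
  ext s
  simp only [mem_cylinderOn]
  exact ⟨fun hs => hs.trans h, fun hs => hs.trans h.symm⟩

variable (w : (Fin p → Bool) → ℝ)

/-- `condMean w R F r` is the conditional expectation of `F` given the coordinates in `R` equal
those of `r`, under the law proportional to `w`. -/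
def condMean (R : Set (Fin p)) (F : (Fin p → Bool) → ℝ) (r : Fin p → Bool) : ℝ :=
  (∑ s ∈ cylinderOn R r, F s * w s) / ∑ s ∈ cylinderOn R r, w s

variable {w} {R : Set (Fin p)}

lemma condMean_congr (F : (Fin p → Bool) → ℝ) {r r' : Fin p → Bool} (h : Set.EqOn r r' R) :
    condMean w R F r = condMean w R F r' := by
  rw [condMean, condMean, cylinderOn_congr h]

lemma condMean_sub (F G : (Fin p → Bool) → ℝ) (r : Fin p → Bool) :
    condMean w R (fun s => F s - G s) r = condMean w R F r - condMean w R G r := by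
  simp only [condMean, sub_mul, sum_sub_distrib, sub_div]

lemma sum_cylinderOn_pos (hw : ∀ s, 0 < w s) (r : Fin p → Bool) :
    0 < ∑ s ∈ cylinderOn R r, w s :=
  sum_pos (fun s _ => hw s) ⟨r, mem_cylinderOn.2 (Set.eqOn_refl r R)⟩

lemma condMean_of_eqOn (hw : ∀ s, 0 < w s) {F : (Fin p → Bool) → ℝ}
    (hF : ∀ s t, Set.EqOn s t R → F s = F t) (r : Fin p → Bool) : condMean w R F r = F r := by
  have hsum : ∑ s ∈ cylinderOn R r, F s * w s = F r * ∑ s ∈ cylinderOn R r, w s := by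
    rw [mul_sum]
    exact sum_congr rfl fun s hs => by rw [hF s r (mem_cylinderOn.1 hs)]
  rw [condMean, hsum, mul_div_cancel_right₀ _ (sum_cylinderOn_pos hw r).ne']

lemma sum_condMean_mul (hw : ∀ s, 0 < w s) (F : (Fin p → Bool) → ℝ) :
    ∑ r, condMean w R F r * w r = ∑ s, F s * w s := by
  set N : (Fin p → Bool) → ℝ := fun r => ∑ t ∈ cylinderOn R r, w t
  have hN : ∀ r s, Set.EqOn s r R → N r = N s := fun r s h => by
    simp only [N, cylinderOn_congr h]
  calc ∑ r, condMean w R F r * w r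
      = ∑ r, ∑ s, if Set.EqOn s r R then F s * w s * (w r / N r) else 0 := by
        refine sum_congr rfl fun r _ => ?_
        rw [condMean, div_mul_eq_mul_div, mul_div_assoc, sum_mul, cylinderOn, sum_filter]
        rfl
    _ = ∑ s, F s * w s * ∑ r, if Set.EqOn r s R then w r / N s else 0 := by
        rw [sum_comm]
        refine sum_congr rfl fun s _ => ?_
        rw [mul_sum]
        refine sum_congr rfl fun r _ => ?_
        by_cases h : Set.EqOn s r R
        · rw [if_pos h, if_pos h.symm, hN r s h]
        · rw [if_neg h, if_neg fun h' => h h'.symm, mul_zero]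
    _ = ∑ s, F s * w s := by
        refine sum_congr rfl fun s _ => ?_
        rw [← sum_filter, ← sum_div, ← cylinderOn, div_self (sum_cylinderOn_pos hw s).ne',
          mul_one]

lemma condMean_compl (hwc : ∀ s, w sᶜ = w s) {F : (Fin p → Bool) → ℝ}
    (hF : ∀ s, F sᶜ = -F s) (r : Fin p → Bool) : condMean w R F rᶜ = -condMean w R F r := by
  have hcyl : ∀ s, sᶜ ∈ cylinderOn R rᶜ ↔ s ∈ cylinderOn R r := fun s => by
    simp only [mem_cylinderOn, Set.EqOn, Pi.compl_apply, compl_inj_iff]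
  have hmap : ∀ G : (Fin p → Bool) → ℝ,
      ∑ s ∈ cylinderOn R rᶜ, G s = ∑ s ∈ cylinderOn R r, G sᶜ := fun G =>
    sum_nbij' compl compl (fun s hs => (hcyl sᶜ).1 (by rwa [compl_compl]))
      (fun s hs => (hcyl s).2 hs) (fun s _ => compl_compl s) (fun s _ => compl_compl s)
      (fun s _ => by rw [compl_compl])
  simp only [condMean, hmap, hwc, hF, neg_mul, sum_neg_distrib, neg_div]

/-- `hmarkov` is the Markov property of `w`: the coordinates in `A` and those off `A ∪ R` are
conditionally independent given those in `R`. -/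
lemma sum_mul_sum_cylinderOn {A : Set (Fin p)}
    (hmarkov : ∀ s t, Set.EqOn s t R → w (A.piecewise s t) * w (A.piecewise t s) = w s * w t)
    {f g : (Fin p → Bool) → ℝ} (hf : ∀ s t, Set.EqOn s t (A ∪ R) → f s = f t)
    (hg : ∀ s t, Set.EqOn s t Aᶜ → g s = g t) (r : Fin p → Bool) :
    (∑ s ∈ cylinderOn R r, f s * w s) * (∑ s ∈ cylinderOn R r, g s * w s) =
      (∑ s ∈ cylinderOn R r, f s * g s * w s) * ∑ s ∈ cylinderOn R r, w s := by
  set C := cylinderOn R r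
  have hC : ∀ q ∈ C ×ˢ C, Set.EqOn q.1 q.2 R := fun q hq => by
    rw [mem_product, mem_cylinderOn, mem_cylinderOn] at hq
    exact hq.1.trans hq.2.symm
  have hCmerge : ∀ q ∈ C ×ˢ C, (A.piecewise q.1 q.2, A.piecewise q.2 q.1) ∈ C ×ˢ C := by
    intro q hq
    rw [mem_product] at hq ⊢
    refine ⟨mem_cylinderOn.2 fun k hk => ?_, mem_cylinderOn.2 fun k hk => ?_⟩ <;>
      by_cases hA : k ∈ A <;>
      simp [hA, mem_cylinderOn.1 hq.1 hk, mem_cylinderOn.1 hq.2 hk]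
  have hinv : ∀ q : (Fin p → Bool) × (Fin p → Bool),
      (A.piecewise (A.piecewise q.1 q.2) (A.piecewise q.2 q.1),
        A.piecewise (A.piecewise q.2 q.1) (A.piecewise q.1 q.2)) = q := fun q => by
    ext k <;> by_cases hA : k ∈ A <;> simp [hA]
  rw [sum_mul_sum, sum_mul_sum, ← sum_product', ← sum_product']
  symm
  refine sum_nbij' (fun q => (A.piecewise q.1 q.2, A.piecewise q.2 q.1))
    (fun q => (A.piecewise q.1 q.2, A.piecewise q.2 q.1)) hCmerge hCmerge
    (fun q _ => hinv q) (fun q _ => hinv q) fun q hq => ?_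
  have hfq : f (A.piecewise q.1 q.2) = f q.1 := hf _ _ fun k hk => by
    by_cases hA : k ∈ A
    · simp [hA]
    · simp [hA, (hC q hq (hk.resolve_left hA)).symm]
  have hgq : g (A.piecewise q.2 q.1) = g q.1 :=
    hg _ _ fun k hk => by simp [Set.notMem_of_mem_compl hk]
  simp only
  rw [hfq, hgq, mul_mul_mul_comm, hmarkov _ _ (hC q hq)]
  ring

lemma condMean_mul (hw : ∀ s, 0 < w s) {A : Set (Fin p)}
    (hmarkov : ∀ s t, Set.EqOn s t R → w (A.piecewise s t) * w (A.piecewise t s) = w s * w t)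
    {f g : (Fin p → Bool) → ℝ} (hf : ∀ s t, Set.EqOn s t (A ∪ R) → f s = f t)
    (hg : ∀ s t, Set.EqOn s t Aᶜ → g s = g t) (r : Fin p → Bool) :
    condMean w R (fun s => f s * g s) r = condMean w R f r * condMean w R g r := by
  have hN := (sum_cylinderOn_pos hw r (R := R)).ne'
  simp only [condMean]
  field_simp
  exact (sum_mul_sum_cylinderOn hmarkov hf hg r).symm

end Configurations

section OddFunctions

variable {p : ℕ}

lemma eq_empty_or_eq_pair_of_ncard_le_two {R : Set (Fin p)} (hR : R.ncard ≤ 2) :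
    R = ∅ ∨ ∃ a b, R = {a, b} := by
  rcases (by omega : R.ncard = 0 ∨ R.ncard = 1 ∨ R.ncard = 2) with h | h | h
  · exact Or.inl ((Set.ncard_eq_zero R.toFinite).1 h)
  · obtain ⟨a, rfl⟩ := Set.ncard_eq_one.1 h
    exact Or.inr ⟨a, a, (Set.pair_eq_singleton a).symm⟩
  · obtain ⟨a, b, -, rfl⟩ := Set.ncard_eq_two.1 h
    exact Or.inr ⟨a, b, rfl⟩

/-- This is where `|R| ≤ 2` enters: `x^a x^b x^c` is odd but not linear. -/
lemma exists_eq_dotProduct_signVec_of_odd {R : Set (Fin p)} (hR : R.ncard ≤ 2)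
    {m : (Fin p → Bool) → ℝ} (hdep : ∀ s t, Set.EqOn s t R → m s = m t)
    (hodd : ∀ s, m sᶜ = -m s) :
    ∃ ξ : Fin p → ℝ, (∀ v ∉ R, ξ v = 0) ∧ ∀ s, m s = ξ ⬝ᵥ signVec s := by
  rcases eq_empty_or_eq_pair_of_ncard_le_two hR with rfl | ⟨a, b, rfl⟩
  · refine ⟨0, fun _ _ => rfl, fun s => ?_⟩
    have := hodd s
    rw [hdep sᶜ s (Set.eqOn_empty _ _)] at this
    simp only [zero_dotProduct]
    linarith
  set T : Fin p → Bool := fun _ => true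
  set T' : Fin p → Bool := Function.update T b false
  refine ⟨Pi.single a ((m T + m T') / 2) + Pi.single b ((m T - m T') / 2), fun v hv => ?_,
    fun s => ?_⟩
  · simp only [Set.mem_insert_iff, Set.mem_singleton_iff, not_or] at hv
    simp [hv.1, hv.2]
  -- Both sides are odd, so it suffices to treat configurations with `s a = true`.
  wlog hsa : s a = true generalizing s
  · have := this sᶜ (by simpa using hsa)
    rw [hodd, signVec_compl, dotProduct_neg] at this
    linarith
  have hlin : (Pi.single a ((m T + m T') / 2) + Pi.single b ((m T - m T') / 2)) ⬝ᵥ signVec s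
      = (m T + m T') / 2 + (m T - m T') / 2 * signVec s b := by
    simp [add_dotProduct, single_dotProduct, signVec, hsa]
  rw [hlin]
  cases hsb : s b
  · have hab : a ≠ b := fun h => by simp [h, hsb] at hsa
    have : m s = m T' := hdep s T' fun k hk => by
      rcases hk with rfl | rfl <;> simp [T', T, hsa, hsb, hab]
    rw [this]; simp [signVec, hsb]; ring
  · have : m s = m T := hdep s T fun k hk => by
      rcases hk with rfl | rfl <;> simp [T, hsa, hsb]
    rw [this]; simp [signVec, hsb]; ring

end OddFunctions

section SecondMoment

variable {p : ℕ} {w : (Fin p → Bool) → ℝ}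

variable (w) in
def secondMoment : Matrix (Fin p) (Fin p) ℝ :=
  Matrix.of fun k l => ∑ s, signVec s k * signVec s l * w s

lemma secondMoment_mulVec_apply (v : Fin p → ℝ) (u : Fin p) :
    (secondMoment w *ᵥ v) u = ∑ s, (signVec s ⬝ᵥ v) * signVec s u * w s := by
  simp only [mulVec, dotProduct, secondMoment, Matrix.of_apply, sum_mul]
  rw [sum_comm]
  exact sum_congr rfl fun s _ => sum_congr rfl fun l _ => by ring

lemma dotProduct_secondMoment_mulVec (v v' : Fin p → ℝ) :
    v ⬝ᵥ secondMoment w *ᵥ v' = ∑ s, (v ⬝ᵥ signVec s) * (signVec s ⬝ᵥ v') * w s := by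
  rw [dotProduct]
  simp_rw [secondMoment_mulVec_apply, mul_sum]
  rw [sum_comm]
  refine sum_congr rfl fun s _ => ?_
  rw [show v ⬝ᵥ signVec s = ∑ u, v u * signVec s u from rfl, sum_mul, sum_mul]
  exact sum_congr rfl fun u _ => by ring

lemma secondMoment_posSemidef (hw : ∀ s, 0 ≤ w s) : (secondMoment w).PosSemidef := by
  refine .of_dotProduct_mulVec_nonneg ?_ fun v => ?_
  · ext k l
    simp only [Matrix.conjTranspose_apply, secondMoment, Matrix.of_apply, star_trivial]
    exact sum_congr rfl fun s _ => by ring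
  · rw [star_trivial, dotProduct_secondMoment_mulVec]
    exact sum_nonneg fun s _ => by
      rw [dotProduct_comm]
      exact mul_nonneg (mul_self_nonneg _) (hw s)

end SecondMoment

/-- For a second-moment matrix `M`, `Pi.single k 1 - ξ` is the residual of `X^k` after a linear
prediction from `X^R`; it must be uncorrelated with every coordinate outside `S`. -/
def ScreensOff {n : Type*} [Fintype n] [DecidableEq n] (M : Matrix n n ℝ) (R S : Set n) : Prop :=
  ∀ k ∈ S, ∃ ξ : n → ℝ, (∀ v ∉ R, ξ v = 0) ∧ ∀ u ∉ S, (M *ᵥ (Pi.single k 1 - ξ)) u = 0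

section Screening

open scoped Classical

variable {p : ℕ} {w : (Fin p → Bool) → ℝ} {R : Set (Fin p)}

lemma dotProduct_signVec_congr {ξ : Fin p → ℝ} (hξ : ∀ v ∉ R, ξ v = 0) {s t : Fin p → Bool}
    (h : Set.EqOn s t R) : ξ ⬝ᵥ signVec s = ξ ⬝ᵥ signVec t := by
  refine sum_congr rfl fun v _ => ?_
  by_cases hv : v ∈ R
  · simp [signVec, h hv]
  · simp [hξ v hv]

lemma screensOff_secondMoment (hw : ∀ s, 0 < w s) (hwc : ∀ s, w sᶜ = w s) {S : Set (Fin p)}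
    (hmarkov : ∀ s t, Set.EqOn s t R → w (S.piecewise s t) * w (S.piecewise t s) = w s * w t)
    (hR : R.ncard ≤ 2) : ScreensOff (secondMoment w) R S := by
  intro k hk
  obtain ⟨ξ, hξR, hξ⟩ := exists_eq_dotProduct_signVec_of_odd hR
    (m := condMean w R fun s => signVec s k) (fun s t h => condMean_congr _ h)
    (condMean_compl hwc fun s => by simp [signVec_compl])
  refine ⟨ξ, hξR, fun u hu => ?_⟩
  have hres : ∀ r, condMean w R (fun s => signVec s k - ξ ⬝ᵥ signVec s) r = 0 := fun r => by
    rw [condMean_sub, condMean_of_eqOn hw (fun s t h => dotProduct_signVec_congr hξR h), ← hξ,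
      sub_self]
  have hf : ∀ s t, Set.EqOn s t (S ∪ R) →
      signVec s k - ξ ⬝ᵥ signVec s = signVec t k - ξ ⬝ᵥ signVec t := fun s t h => by
    rw [dotProduct_signVec_congr hξR (h.mono Set.subset_union_right)]
    simp [signVec, h (Set.mem_union_left R hk)]
  have hg : ∀ s t, Set.EqOn s t Sᶜ → signVec s u = signVec t u := fun s t h => by
    simp [signVec, h hu]
  calc (secondMoment w *ᵥ (Pi.single k 1 - ξ)) u
      = ∑ s, (signVec s k - ξ ⬝ᵥ signVec s) * signVec s u * w s := by
        simp only [secondMoment_mulVec_apply, dotProduct_sub, dotProduct_single, mul_one,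
          dotProduct_comm]
    _ = ∑ r, condMean w R (fun s => signVec s k - ξ ⬝ᵥ signVec s) r *
          condMean w R (fun s => signVec s u) r * w r := by
        rw [← sum_condMean_mul (R := R) hw]
        simp only [condMean_mul hw hmarkov hf hg]
    _ = 0 := by simp [hres]

end Screening

section LinearAlgebra

variable {n : Type*} [Fintype n] {M : Matrix n n ℝ}

lemma Matrix.PosSemidef.mulVec_eq_of_forall_ne (hM : M.PosSemidef) {c a : n → ℝ}
    (h : ∀ v, c v ≠ a v → (M *ᵥ c) v = (M *ᵥ a) v) : M *ᵥ c = M *ᵥ a := by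
  have hzero : star (c - a) ⬝ᵥ M *ᵥ (c - a) = 0 := by
    refine sum_eq_zero fun v _ => ?_
    by_cases hv : c v = a v
    · simp [hv]
    · simp [mulVec_sub, h v hv]
  rw [← sub_eq_zero, ← mulVec_sub]
  exact (hM.dotProduct_mulVec_zero_iff _).1 hzero

variable [DecidableEq n] {R S : Set n}

lemma ScreensOff.exists_mulVec_eq_zero (hS : ScreensOff M R S) (hSR : Disjoint S R)
    (c : n → ℝ) : ∃ a : n → ℝ, (∀ v ∈ S, a v = c v) ∧ (∀ v, v ∉ S → v ∉ R → a v = 0) ∧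
      ∀ u ∉ S, (M *ᵥ a) u = 0 := by
  classical
  choose! ξ hξR hξ using hS
  set c' : n → ℝ := fun k => if k ∈ S then c k else 0
  have hc'ξ : ∀ k v, v ∉ R → c' k * ξ k v = 0 := fun k v hv => by
    by_cases hk : k ∈ S
    · simp [hξR k hk v hv]
    · simp [c', hk]
  set a : n → ℝ := ∑ k, c' k • (Pi.single k 1 - ξ k)
  have happly : ∀ v ∉ R, a v = c' v := fun v hv => by
    simp only [a, Finset.sum_apply, Pi.smul_apply, Pi.sub_apply, smul_eq_mul, mul_sub,
      hc'ξ _ v hv, sub_zero]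
    simp only [Pi.single_apply, mul_ite, mul_one, mul_zero, sum_ite_eq, mem_univ, if_true]
  refine ⟨a, fun v hv => ?_, fun v hv hvR => ?_, fun u hu => ?_⟩
  · simp [happly v (Set.disjoint_left.1 hSR hv), c', hv]
  · simp [happly v hvR, c', hv]
  · simp only [a, mulVec_sum, mulVec_smul, Finset.sum_apply, Pi.smul_apply, smul_eq_mul]
    refine sum_eq_zero fun k _ => ?_
    by_cases hk : k ∈ S
    · rw [hξ k hk u hu, mul_zero]
    · simp [c', hk]

lemma ScreensOff.exists_mulVec_eq (hS : ScreensOff M R S) (hM : M.PosSemidef)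
    (hSR : Disjoint S R) {i j : n} (hi : i ∈ S) (hjS : j ∉ S) (hjR : j ∉ R) {c : n → ℝ}
    (hcj : c j = 0) (hc : ∀ l, l ≠ i → l ≠ j → (M *ᵥ c) l = 0) :
    ∃ a : n → ℝ, M *ᵥ c = M *ᵥ a ∧ (∀ v, v ∉ S → v ∉ R → a v = 0) ∧
      ∀ u ∉ S, (M *ᵥ a) u = 0 := by
  obtain ⟨a, haS, haout, hMa⟩ := hS.exists_mulVec_eq_zero hSR c
  refine ⟨a, hM.mulVec_eq_of_forall_ne fun v hv => ?_, haout, hMa⟩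
  have hvS : v ∉ S := fun h => hv (haS v h).symm
  have hvj : v ≠ j := by rintro rfl; exact hv (by rw [hcj, haout v hjS hjR])
  rw [hc v (by rintro rfl; exact hvS hi) hvj, hMa v hvS]

lemma dotProduct_mulVec_eq_zero_of_screensOff (hM : M.PosSemidef) {Si Sj : Set n}
    (hSi : ScreensOff M R Si) (hSj : ScreensOff M R Sj) {i j : n} (hi : i ∈ Si) (hj : j ∈ Sj)
    (hdisj : Disjoint Si Sj) (hSiR : Disjoint Si R) (hSjR : Disjoint Sj R) {c d : n → ℝ}
    (hcj : c j = 0) (hdi : d i = 0) (hc : ∀ l, l ≠ i → l ≠ j → (M *ᵥ c) l = 0)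
    (hd : ∀ l, l ≠ i → l ≠ j → (M *ᵥ d) l = 0) : c ⬝ᵥ M *ᵥ d = 0 := by
  obtain ⟨a, hca, -, hMa⟩ := hSi.exists_mulVec_eq hM hSiR hi
    (Set.disjoint_right.1 hdisj hj) (Set.disjoint_left.1 hSjR hj) hcj hc
  obtain ⟨b, hdb, hb, -⟩ := hSj.exists_mulVec_eq hM hSjR hj
    (Set.disjoint_left.1 hdisj hi) (Set.disjoint_left.1 hSiR hi) hdi fun l hj hi => hd l hi hj
  have hMsymm : Mᵀ = M := by
    simpa [conjTranspose_eq_transpose_of_trivial] using hM.isHermitian.eq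
  calc c ⬝ᵥ M *ᵥ d = (M *ᵥ a) ⬝ᵥ b := by
        rw [hdb, dotProduct_mulVec, ← mulVec_transpose, hMsymm, hca]
    _ = 0 := sum_eq_zero fun u _ => by
        by_cases hu : u ∈ Si
        · rw [hb u (Set.disjoint_left.1 hdisj hu) (Set.disjoint_left.1 hSiR hu), mul_zero]
        · rw [hMa u hu, zero_mul]

end LinearAlgebra

section IsingWeight

variable {p : ℕ} (β : Matrix (Fin p) (Fin p) ℝ)

lemma isingWeight_pos (x : Fin p → ℝ) : 0 < isingWeight β x := Real.exp_pos _

lemma isingZ_pos : 0 < isingZ β :=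
  sum_pos (fun _ _ => isingWeight_pos β _) univ_nonempty

lemma isingWeight_neg (x : Fin p → ℝ) : isingWeight β (-x) = isingWeight β x := by
  simp only [isingWeight, Pi.neg_apply, mul_neg, neg_mul, neg_neg]

lemma isingWeight_signVec_compl (s : Fin p → Bool) :
    isingWeight β (signVec sᶜ) = isingWeight β (signVec s) := by
  rw [signVec_compl, isingWeight_neg]

lemma signVec_piecewise (A : Set (Fin p)) [DecidablePred (· ∈ A)] (s t : Fin p → Bool)
    (u : Fin p) : signVec (A.piecewise s t) u = if u ∈ A then signVec s u else signVec t u := by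
  by_cases hu : u ∈ A <;> simp [hu, signVec]

lemma signVec_piecewise_mul_add {A R : Set (Fin p)} [DecidablePred (· ∈ A)]
    {s t : Fin p → Bool} (hst : Set.EqOn s t R) {u v : Fin p}
    (huv : (u ∈ A ↔ v ∈ A) ∨ u ∈ R ∨ v ∈ R) :
    signVec (A.piecewise s t) u * signVec (A.piecewise s t) v +
        signVec (A.piecewise t s) u * signVec (A.piecewise t s) v =
      signVec s u * signVec s v + signVec t u * signVec t v := by
  simp only [signVec_piecewise]
  rcases huv with hA | hu | hv
  · by_cases hu : u ∈ A
    · simp [hu, hA.1 hu]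
    · simp [hu, mt hA.2 hu, add_comm]
  · have : signVec s u = signVec t u := by simp [signVec, hst hu]
    split_ifs <;> rw [this] <;> ring
  · have : signVec s v = signVec t v := by simp [signVec, hst hv]
    split_ifs <;> rw [this] <;> ring

lemma isingWeight_piecewise_mul {A R : Set (Fin p)} [DecidablePred (· ∈ A)]
    (hcut : ∀ u v, β u v ≠ 0 → (u ∈ A ↔ v ∈ A) ∨ u ∈ R ∨ v ∈ R)
    {s t : Fin p → Bool} (hst : Set.EqOn s t R) :
    isingWeight β (signVec (A.piecewise s t)) * isingWeight β (signVec (A.piecewise t s)) =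
      isingWeight β (signVec s) * isingWeight β (signVec t) := by
  simp only [isingWeight, ← Real.exp_add, ← sum_add_distrib]
  congr 1
  refine sum_congr rfl fun u _ => sum_congr rfl fun v _ => ?_
  split_ifs
  · by_cases hβ : β u v = 0
    · simp [hβ]
    · linear_combination β u v * signVec_piecewise_mul_add hst (hcut u v hβ)
  · ring

end IsingWeight

section Separation

variable {ι : Type*} {E : Set (ι × ι)} {i j : ι} {R : Set ι}

lemma reducedAdj_symm (hE : ∀ k l, (k, l) ∈ E → (l, k) ∈ E) :
    Std.Symm (reducedAdj E i j R) :=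
  ⟨fun k l ⟨hkl, hij, hji, hR⟩ =>
    ⟨hE k l hkl, fun h => hji ⟨h.2, h.1⟩, fun h => hij ⟨h.2, h.1⟩, hR.symm⟩⟩

lemma disjoint_component_of_notMem {k : ι} (hk : k ∉ R) : Disjoint (component E i j R k) R := by
  refine Set.disjoint_left.2 fun l hl => ?_
  induction hl with
  | refl => exact hk
  | tail _ hadj ih => exact fun hl => ih (hadj.2.2.2.2 hl)

lemma disjoint_component_component (hE : ∀ k l, (k, l) ∈ E → (l, k) ∈ E)
    (hij : ¬ Relation.ReflTransGen (reducedAdj E i j R) i j) :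
    Disjoint (component E i j R i) (component E i j R j) := by
  have := reducedAdj_symm (i := i) (j := j) (R := R) hE
  exact Set.disjoint_left.2 fun l hi hj => hij (hi.trans (Std.Symm.symm _ _ hj))

lemma mem_component_iff_of_reducedAdj (hE : ∀ k l, (k, l) ∈ E → (l, k) ∈ E) {k u v : ι}
    (h : reducedAdj E i j R u v) : u ∈ component E i j R k ↔ v ∈ component E i j R k :=
  ⟨fun hu => hu.tail h, fun hv => hv.tail ((reducedAdj_symm hE).symm _ _ h)⟩

end Separation

section IsingGraph

variable {p : ℕ} {β : Matrix (Fin p) (Fin p) ℝ}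

lemma isingEdges_symm (hsym : β.IsSymm) (k l : Fin p) :
    (k, l) ∈ isingEdges β → (l, k) ∈ isingEdges β :=
  fun ⟨hkl, hβ⟩ => ⟨hkl.symm, by rwa [hsym.apply]⟩

lemma isingEdges_cut (hsym : β.IsSymm) {i j : Fin p} (hβ : β i j = 0) (R : Set (Fin p))
    (k u v : Fin p) (huv : β u v ≠ 0) :
    (u ∈ component (isingEdges β) i j R k ↔ v ∈ component (isingEdges β) i j R k) ∨
      u ∈ R ∨ v ∈ R := by
  by_cases hR : u ∈ R ∨ v ∈ R
  · exact Or.inr hR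
  rcases eq_or_ne u v with rfl | hne
  · exact Or.inl Iff.rfl
  obtain ⟨huR, hvR⟩ := not_or.1 hR
  refine Or.inl (mem_component_iff_of_reducedAdj (isingEdges_symm hsym) ⟨⟨hne, huv⟩, ?_, ?_,
    iff_of_false huR hvR⟩)
  · rintro ⟨rfl, rfl⟩; exact huv hβ
  · rintro ⟨rfl, rfl⟩; exact huv (by rw [hsym.apply]; exact hβ)

end IsingGraph

section Transfer

variable {p : ℕ} {β : Matrix (Fin p) (Fin p) ℝ}

lemma sum_isingWeight_neg (F : (Fin p → ℝ) → ℝ) :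
    ∑ s, F (-signVec s) * isingWeight β (signVec s) =
      ∑ s, F (signVec s) * isingWeight β (signVec s) :=
  Fintype.sum_bijective (·ᶜ) compl_involutive.bijective _ _ fun s => by
    rw [signVec_compl, isingWeight_neg]

lemma exists_signVec_eq {Ω : Type*} {X : Ω → Fin p → ℝ}
    (hpm : ∀ ω k, X ω k = 1 ∨ X ω k = -1) (ω : Ω) : ∃ s, X ω = signVec s :=
  ⟨fun k => decide (X ω k = 1), funext fun k => by
    rcases hpm ω k with h | h <;> simp [signVec, h]⟩

variable {Ω : Type*} [MeasurableSpace Ω] {μ : Measure Ω} [IsProbabilityMeasure μ]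
  {X : Ω → Fin p → ℝ}

lemma expec_comp (hmeas : ∀ k, Measurable fun ω => X ω k) (hI : IsSymIsing μ X β)
    (Φ : (Fin p → ℝ) → ℝ) :
    expec μ (fun ω => Φ (X ω)) =
      (∑ s, Φ (signVec s) * isingWeight β (signVec s)) / isingZ β := by
  obtain ⟨-, -, hpm, hpmf⟩ := hI
  have hatom : ∀ s, MeasurableSet {ω | X ω = signVec s} := fun s =>
    measurable_pi_iff.2 hmeas (measurableSet_singleton _)
  have hdecomp : (fun ω => Φ (X ω)) =
      fun ω => ∑ s, {ω | X ω = signVec s}.indicator (fun _ => Φ (signVec s)) ω := by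
    funext ω
    obtain ⟨s₀, hs₀⟩ := exists_signVec_eq hpm ω
    rw [sum_eq_single s₀ (fun s _ hs => ?_) (by simp)]
    · simp [hs₀]
    · simp [hs₀, signVec_injective.ne (Ne.symm hs)]
  rw [expec, hdecomp, integral_finsetSum _ fun s _ => (integrable_const _).indicator (hatom s),
    sum_div]
  refine sum_congr rfl fun s _ => ?_
  have hμ : μ {ω | X ω = signVec s} =
      ENNReal.ofReal (isingWeight β (signVec s) / isingZ β) := by
    rw [← hpmf s]; simp only [funext_iff]
  rw [integral_indicator_const _ (hatom s), measureReal_def, hμ,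
    ENNReal.toReal_ofReal (div_nonneg (isingWeight_pos β _).le (isingZ_pos β).le), smul_eq_mul]
  ring

lemma expec_coord_eq_zero (hmeas : ∀ k, Measurable fun ω => X ω k) (hI : IsSymIsing μ X β)
    (l : Fin p) : expec μ (fun ω => X ω l) = 0 := by
  have := sum_isingWeight_neg (β := β) fun x => x l
  simp only [Pi.neg_apply, neg_mul, sum_neg_distrib] at this
  rw [expec_comp hmeas hI (fun x => x l), (by linarith : ∑ s, signVec s l * _ = 0), zero_div]

lemma apply_neg_one_of_expec_eq_zero (hmeas : ∀ k, Measurable fun ω => X ω k)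
    (hI : IsSymIsing μ X β) {φ : ℝ → ℝ} {k : Fin p} (h : expec μ (fun ω => φ (X ω k)) = 0) :
    φ (-1) = -φ 1 := by
  rw [expec_comp hmeas hI fun x => φ (x k), div_eq_zero_iff] at h
  have hsum := h.resolve_right (isingZ_pos β).ne'
  have hflip := sum_isingWeight_neg (β := β) fun x => φ (x k)
  have hpair : ∀ s : Fin p → Bool, φ (signVec s k) + φ (-signVec s k) = φ 1 + φ (-1) := by
    intro s; cases h : s k <;> simp [signVec, h, add_comm]
  have hZ : (φ 1 + φ (-1)) * isingZ β = 0 := by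
    simp only [Pi.neg_apply] at hflip
    calc (φ 1 + φ (-1)) * isingZ β
        = ∑ s, (φ (signVec s k) + φ (-signVec s k)) * isingWeight β (signVec s) := by
          rw [isingZ, mul_sum]
          exact sum_congr rfl fun s _ => by rw [hpair]
      _ = 0 := by simp only [add_mul, sum_add_distrib]; rw [hflip, hsum, add_zero]
  linarith [(mul_eq_zero.1 hZ).resolve_right (isingZ_pos β).ne']

lemma exists_eq_dotProduct_of_mem_addSpace (hmeas : ∀ k, Measurable fun ω => X ω k)
    (hI : IsSymIsing μ X β) {A : Set (Fin p)} {f : Ω → ℝ} (hf : f ∈ addSpace μ X A) :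
    ∃ c : Fin p → ℝ, (∀ k ∉ A, c k = 0) ∧ f = fun ω => c ⬝ᵥ X ω := by
  induction hf using Submodule.span_induction with
  | mem g hg =>
    obtain ⟨k, hk, φ, hφ, rfl⟩ := hg
    refine ⟨Pi.single k (φ 1), fun l hl => ?_, funext fun ω => ?_⟩
    · rw [Pi.single_eq_of_ne (by rintro rfl; exact hl hk)]
    · rcases hI.2.2.1 ω k with h | h
      · simp [single_dotProduct, h]
      · simp [single_dotProduct, h, apply_neg_one_of_expec_eq_zero hmeas hI hφ]
  | zero => exact ⟨0, fun _ _ => rfl, by funext; simp⟩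
  | add f g _ _ hf hg =>
    obtain ⟨c, hc, rfl⟩ := hf
    obtain ⟨d, hd, rfl⟩ := hg
    exact ⟨c + d, fun k hk => by simp [hc k hk, hd k hk], by funext; simp [add_dotProduct]⟩
  | smul a f _ hf =>
    obtain ⟨c, hc, rfl⟩ := hf
    exact ⟨a • c, fun k hk => by simp [hc k hk], by funext; simp [smul_dotProduct]⟩

lemma coord_mem_addSpace (hmeas : ∀ k, Measurable fun ω => X ω k) (hI : IsSymIsing μ X β)
    {A : Set (Fin p)} {l : Fin p} (hl : l ∈ A) : (fun ω => X ω l) ∈ addSpace μ X A :=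
  Submodule.subset_span ⟨l, hl, id, expec_coord_eq_zero hmeas hI l, rfl⟩

end Transfer

section PairConfigurations

variable {p : ℕ} {i j : Fin p}

variable (i j) in
def pairConfig (a b : Bool) : Fin p → Bool :=
  Function.update (Function.update (fun _ => true) i a) j b

lemma pairConfig_apply_left (hij : i ≠ j) (a b : Bool) : pairConfig i j a b i = a := by
  simp [pairConfig, hij]

lemma pairConfig_apply_right (a b : Bool) : pairConfig i j a b j = b := by
  simp [pairConfig]

lemma pairConfig_apply_of_ne (a b : Bool) {k : Fin p} (hi : k ≠ i) (hj : k ≠ j) :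
    pairConfig i j a b k = true := by
  simp [pairConfig, hi, hj]

lemma sum_ite_pairConfig (hij : i ≠ j) (P : Bool → Bool → Prop) [∀ a b, Decidable (P a b)]
    (G : (Fin p → Bool) → ℝ) :
    ∑ s, (if P (s i) (s j) ∧ ∀ k, k ≠ i → k ≠ j → s k = true then G s else 0) =
      ∑ a, ∑ b, if P a b then G (pairConfig i j a b) else 0 := by
  have hleft : ∀ s : Fin p → Bool, (∀ k, k ≠ i → k ≠ j → s k = true) →
      pairConfig i j (s i) (s j) = s := fun s hs => funext fun k => by
    by_cases hkj : k = j
    · subst hkj; exact pairConfig_apply_right _ _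
    by_cases hki : k = i
    · subst hki; exact pairConfig_apply_left hij _ _
    rw [pairConfig_apply_of_ne _ _ hki hkj, hs k hki hkj]
  rw [← Fintype.sum_prod_type' (f := fun a b => if P a b then G (pairConfig i j a b) else 0),
    ← sum_filter, ← sum_filter]
  refine sum_nbij' (fun s => (s i, s j)) (fun ab => pairConfig i j ab.1 ab.2) ?_ ?_ ?_ ?_ ?_
  · intro s hs
    simp only [mem_filter, mem_univ, true_and] at hs ⊢
    exact hs.1
  · intro ab hab
    simp only [mem_filter, mem_univ, true_and] at hab ⊢
    exact ⟨by rwa [pairConfig_apply_left hij, pairConfig_apply_right],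
      fun k hi hj => pairConfig_apply_of_ne _ _ hi hj⟩
  · intro s hs
    simp only [mem_filter, mem_univ, true_and] at hs
    exact hleft s hs.2
  · intro ab _
    simp [pairConfig_apply_left hij, pairConfig_apply_right]
  · intro s hs
    simp only [mem_filter, mem_univ, true_and] at hs
    rw [hleft s hs.2]

lemma signVec_pairConfig_apply (a b : Bool) (u : Fin p) :
    signVec (pairConfig i j a b) u =
      if u = j then (if b then 1 else -1) else if u = i then (if a then 1 else -1) else 1 := by
  simp only [pairConfig, signVec, Function.update_apply]
  split_ifs <;> simp_all

lemma signVec_pairConfig_cross (hij : i ≠ j) (u v : Fin p) :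
    signVec (pairConfig i j true true) u * signVec (pairConfig i j true true) v +
        signVec (pairConfig i j false false) u * signVec (pairConfig i j false false) v -
        signVec (pairConfig i j true false) u * signVec (pairConfig i j true false) v -
        signVec (pairConfig i j false true) u * signVec (pairConfig i j false true) v =
      (if v = j ∧ u = i then 4 else 0) + (if v = i ∧ u = j then 4 else 0) := by
  simp only [signVec_pairConfig_apply]
  by_cases hui : u = i <;> by_cases huj : u = j <;> by_cases hvi : v = i <;>
    by_cases hvj : v = j <;> simp_all <;> norm_num

lemma isingWeight_pairConfig (hsym : β.IsSymm) (hij : i ≠ j) :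
    isingWeight β (signVec (pairConfig i j true true)) *
        isingWeight β (signVec (pairConfig i j false false)) =
      Real.exp (4 * β i j) * (isingWeight β (signVec (pairConfig i j true false)) *
        isingWeight β (signVec (pairConfig i j false true))) := by
  simp only [isingWeight, ← Real.exp_add]
  congr 1
  have hterm : ∀ u v : Fin p,
      ((if u < v then β u v * signVec (pairConfig i j true true) u *
          signVec (pairConfig i j true true) v else 0) +
        (if u < v then β u v * signVec (pairConfig i j false false) u *
          signVec (pairConfig i j false false) v else 0) -
        (if u < v then β u v * signVec (pairConfig i j true false) u *
          signVec (pairConfig i j true false) v else 0) -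
        (if u < v then β u v * signVec (pairConfig i j false true) u *
          signVec (pairConfig i j false true) v else 0)) =
      4 * ((if v = j ∧ u = i then (if u < v then β u v else 0) else 0) +
        (if v = i ∧ u = j then (if u < v then β u v else 0) else 0)) := fun u v => by
    have hcross := signVec_pairConfig_cross hij u v
    by_cases huv : u < v
    · simp only [if_pos huv]
      split_ifs at hcross ⊢ <;> linear_combination β u v * hcross
    · simp [huv]
  have hsum := Fintype.sum_congr _ _ fun u => Fintype.sum_congr _ _ (hterm u)
  simp only [sum_add_distrib, sum_sub_distrib, ← mul_sum, ite_and, sum_ite_eq', mem_univ,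
    if_true] at hsum
  rcases lt_or_gt_of_ne hij with h | h
  · simp only [h, h.not_gt, if_true, if_false, add_zero] at hsum
    linarith
  · simp only [h, h.not_gt, if_true, if_false, zero_add, hsym.apply] at hsum
    linarith

end PairConfigurations

section ConditionalIndependence

variable {p : ℕ} {β : Matrix (Fin p) (Fin p) ℝ} {Ω : Type*} [MeasurableSpace Ω]
  {μ : Measure Ω} [IsProbabilityMeasure μ] {X : Ω → Fin p → ℝ}

lemma measureReal_setOf_comp (hmeas : ∀ k, Measurable fun ω => X ω k) (hI : IsSymIsing μ X β)
    (Q : (Fin p → ℝ) → Prop) [DecidablePred Q] :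
    μ.real {ω | Q (X ω)} =
      (∑ s, if Q (signVec s) then isingWeight β (signVec s) else 0) / isingZ β := by
  have hS : MeasurableSet {ω | Q (X ω)} := by
    have : {ω | Q (X ω)} = X ⁻¹' ({x | Q x} ∩ Set.range signVec) := by
      ext ω
      exact ⟨fun h => ⟨h, (exists_signVec_eq hI.2.2.1 ω).imp fun s hs => hs.symm⟩, And.left⟩
    rw [this]
    exact measurable_pi_iff.2 hmeas
      ((Set.finite_range _).subset Set.inter_subset_right).measurableSet
  have := expec_comp hmeas hI fun x => if Q x then (1 : ℝ) else 0
  simp only [ite_mul, one_mul, zero_mul] at this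
  rw [← this, ← integral_indicator_one hS, expec]
  congr 1
  funext ω
  simp [Set.indicator_apply]

lemma measureReal_pair (hmeas : ∀ k, Measurable fun ω => X ω k) (hI : IsSymIsing μ X β)
    {i j : Fin p} (hij : i ≠ j) (P : ℝ → ℝ → Prop) [∀ a b, Decidable (P a b)] :
    μ.real {ω | P (X ω i) (X ω j) ∧ ∀ k, k ≠ i → k ≠ j → X ω k = 1} =
      (∑ a, ∑ b, if P (if a then 1 else -1) (if b then 1 else -1)
        then isingWeight β (signVec (pairConfig i j a b)) else 0) / isingZ β := by
  rw [measureReal_setOf_comp hmeas hI (fun x => P (x i) (x j) ∧ ∀ k, k ≠ i → k ≠ j → x k = 1)]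
  congr 1
  rw [← sum_ite_pairConfig hij (fun a b => P (if a then 1 else -1) (if b then 1 else -1))
    fun s => isingWeight β (signVec s)]
  refine sum_congr rfl fun s _ => if_congr ?_ rfl rfl
  simp only [signVec_eq_one_iff]
  rfl

lemma beta_eq_zero_of_CIpair (hmeas : ∀ k, Measurable fun ω => X ω k) (hI : IsSymIsing μ X β)
    {i j : Fin p} (hij : i ≠ j) (hCI : CIpair μ X i j) : β i j = 0 := by
  have h := congrArg ENNReal.toReal (hCI 1 1 fun _ => 1)
  simp only [ENNReal.toReal_mul, ← measureReal_def] at h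
  have h11 := measureReal_pair hmeas hI hij fun a b => a = 1 ∧ b = 1
  have hi := measureReal_pair hmeas hI hij fun a _ => a = 1
  have hj := measureReal_pair hmeas hI hij fun _ b => b = 1
  have hrest := measureReal_pair hmeas hI hij fun _ _ => True
  simp only [and_assoc] at h11
  simp only [true_and] at hrest
  rw [h11, hi, hj, hrest] at h
  norm_num [Fintype.sum_bool] at h
  field_simp [(isingZ_pos β).ne'] at h
  have hpos : 0 < isingWeight β (signVec (pairConfig i j true false)) *
      isingWeight β (signVec (pairConfig i j false true)) :=
    mul_pos (isingWeight_pos β _) (isingWeight_pos β _)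
  have hexp : Real.exp (4 * β i j) = 1 := by
    have := isingWeight_pairConfig hI.1 hij
    exact (mul_eq_right₀ hpos.ne').1 (by linear_combination h - this)
  linarith [Real.exp_eq_one_iff _ |>.1 hexp]

end ConditionalIndependence

abbrev isingMoment {p : ℕ} (β : Matrix (Fin p) (Fin p) ℝ) : Matrix (Fin p) (Fin p) ℝ :=
  secondMoment fun s => isingWeight β (signVec s)

section Additive

variable {p : ℕ} {β : Matrix (Fin p) (Fin p) ℝ} {Ω : Type*} [MeasurableSpace Ω]
  {μ : Measure Ω} [IsProbabilityMeasure μ] {X : Ω → Fin p → ℝ}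

lemma expec_dotProduct_mul_coord (hmeas : ∀ k, Measurable fun ω => X ω k)
    (hI : IsSymIsing μ X β) (c : Fin p → ℝ) (l : Fin p) :
    expec μ (fun ω => (c ⬝ᵥ X ω) * X ω l) =
      (isingMoment β *ᵥ c) l / isingZ β := by
  rw [expec_comp hmeas hI fun x => (c ⬝ᵥ x) * x l, secondMoment_mulVec_apply]
  simp only [dotProduct_comm c]

lemma expec_dotProduct_mul_dotProduct (hmeas : ∀ k, Measurable fun ω => X ω k)
    (hI : IsSymIsing μ X β) (c d : Fin p → ℝ) :
    expec μ (fun ω => (c ⬝ᵥ X ω) * (d ⬝ᵥ X ω)) =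
      c ⬝ᵥ isingMoment β *ᵥ d / isingZ β := by
  rw [expec_comp hmeas hI fun x => (c ⬝ᵥ x) * (d ⬝ᵥ x), dotProduct_secondMoment_mulVec]
  simp only [dotProduct_comm d]

lemma aci_of_isingMoment (hmeas : ∀ k, Measurable fun ω => X ω k) (hI : IsSymIsing μ X β)
    {i j : Fin p} (hij : i ≠ j)
    (h : ∀ c d : Fin p → ℝ, c j = 0 → d i = 0 →
      (∀ l, l ≠ i → l ≠ j → (isingMoment β *ᵥ c) l = 0) →
      (∀ l, l ≠ i → l ≠ j → (isingMoment β *ᵥ d) l = 0) →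
      c ⬝ᵥ isingMoment β *ᵥ d = 0) :
    ACI μ X {i} {j} ({i, j}ᶜ : Set (Fin p)) := by
  intro f hf hfo g hg hgo
  obtain ⟨c, hc, rfl⟩ := exists_eq_dotProduct_of_mem_addSpace hmeas hI hf
  obtain ⟨d, hd, rfl⟩ := exists_eq_dotProduct_of_mem_addSpace hmeas hI hg
  have horth : ∀ v : Fin p → ℝ, (∀ h ∈ addSpace μ X ({i, j}ᶜ : Set (Fin p)),
      expec μ (fun ω => (v ⬝ᵥ X ω) * h ω) = 0) →
      ∀ l, l ≠ i → l ≠ j → (isingMoment β *ᵥ v) l = 0 :=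
    fun v hv l hli hlj => by
      have := hv _ (coord_mem_addSpace hmeas hI (l := l) (by simp [hli, hlj]))
      rwa [expec_dotProduct_mul_coord hmeas hI, div_eq_zero_iff,
        or_iff_left (isingZ_pos β).ne'] at this
  rw [expec_dotProduct_mul_dotProduct hmeas hI,
    h c d (hc j (by simp [hij.symm])) (hd i (by simp [hij])) (horth c hfo) (horth d hgo),
    zero_div]

end Additive

theorem stmt5_general {Ω : Type*} [MeasurableSpace Ω] (μ : MeasureTheory.Measure Ω)
    [MeasureTheory.IsProbabilityMeasure μ]
    (p : ℕ) (X : Ω → Fin p → ℝ) (hmeas : ∀ k, Measurable fun ω => X ω k)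
    (β : Matrix (Fin p) (Fin p) ℝ) (hIsing : IsSymIsing μ X β)
    (i j : Fin p) (hij : i ≠ j) (R : Set (Fin p))
    (hsep : IsSeparator (isingEdges β) i j R) (hR : R.ncard ≤ 2) :
    CIpair μ X i j → ACI μ X {i} {j} ({i, j}ᶜ : Set (Fin p)) := by
  intro hCI
  classical
  have hβ := beta_eq_zero_of_CIpair hmeas hIsing hij hCI
  have hscreen : ∀ k, ScreensOff (isingMoment β) R (component (isingEdges β) i j R k) := fun k =>
    screensOff_secondMoment (fun _ => isingWeight_pos β _) (isingWeight_signVec_compl β)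
      (fun _ _ => isingWeight_piecewise_mul β (isingEdges_cut hIsing.1 hβ R k)) hR
  refine aci_of_isingMoment hmeas hIsing hij fun c d hcj hdi hc hd => ?_
  exact dotProduct_mulVec_eq_zero_of_screensOff
    (secondMoment_posSemidef fun _ => (isingWeight_pos β _).le)
    (hscreen i) (hscreen j) .refl .refl
    (disjoint_component_component (isingEdges_symm hIsing.1) hsep.2.2)
    (disjoint_component_of_notMem hsep.1) (disjoint_component_of_notMem hsep.2.1) hcj hdi hc hd

/-- under a symmetric Ising model, if there is an `(i,j)`-separator of
cardinality at most 2, then conditional independence of `X^i` and `X^j` given the rest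
implies additive conditional independence. -/
theorem stmt5 {Ω : Type*} [MeasurableSpace Ω] (μ : MeasureTheory.Measure Ω)
    [MeasureTheory.IsProbabilityMeasure μ]
    (p : ℕ) (hp : 3 ≤ p) (X : Ω → Fin p → ℝ) (hmeas : ∀ k, Measurable fun ω => X ω k)
    (β : Matrix (Fin p) (Fin p) ℝ) (hIsing : IsSymIsing μ X β)
    (i j : Fin p) (hij : i ≠ j) (R : Set (Fin p))
    (hsep : IsSeparator (isingEdges β) i j R) (hR : R.ncard ≤ 2) :
    CIpair μ X i j → ACI μ X {i} {j} ({i, j}ᶜ : Set (Fin p)) :=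
  stmt5_general μ p X hmeas β hIsing i j hij R hsep hR
end
end

section
/- Let X_1,...,X_n be i.i.d. copies of a random vector X ∈ {0,1,...,m}^p, let W_k ∈ ℝ^{mp} be the stacked indicator vector W_k = (V(X_k^1)ᵀ,...,V(X_k^p)ᵀ)ᵀ with V(x) = (1_{{1}}(x),...,1_{{m}}(x)), let Σ̂ = (1/n) Σ_{k=1}^n (W_k − W̄)(W_k − W̄)ᵀ be the sample covariance matrix (W̄ the sample mean), and let Σ be the covariance matrix of W_1. Then for any constant τ > 2, with probability at least 1 − 1/p^{τ−2}, the entrywise maximum norm satisfies ‖Σ̂ − Σ‖_∞ ≤ (3/√2) · √((log(6m²) + τ log p)/n). -/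
open MeasureTheory

noncomputable section

/-- The sample covariance matrix of an `ℝ^q`-valued sample `W_1, …, W_n`:
`Σ̂ = n⁻¹ Σ_k (W_k − W̄)(W_k − W̄)ᵀ`. -/
def sampleCov {Ω : Type*} {q : Type*} [Fintype q] (n : ℕ)
    (W : Ω → q → ℝ) (ωs : Fin n → Ω) : Matrix q q ℝ :=
  fun z w => (1 / (n : ℝ)) * ∑ k : Fin n,
    (W (ωs k) z - (1 / (n : ℝ)) * ∑ l : Fin n, W (ωs l) z) *
    (W (ωs k) w - (1 / (n : ℝ)) * ∑ l : Fin n, W (ωs l) w)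

/-!
Writing an entry of `Σ̂` as `mean(YZ) − mean(Y)·mean(Z)` for `[0,1]`-valued coordinates `Y, Z`,
and using that the sample and population means lie in `[0,1]`, the entry deviates from the
population covariance by at most the sum of the deviations of three sample means. Hoeffding's
inequality bounds each of these beyond `s` by `2 exp(−2ns²)`, and a union bound over the
`(pm)²` entries with `2ns² = log(6m²) + τ log p` gives total failure probability
`6 (pm)² / (6m² p^τ) = p^{2−τ}`.
-/

open ProbabilityTheory Real
open scoped NNReal

def sampleMean {Ω : Type*} (n : ℕ) (Y : Ω → ℝ) (ωs : Fin n → Ω) : ℝ :=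
  (1 / (n : ℝ)) * ∑ k, Y (ωs k)

section Hoeffding

variable {Ω : Type*} [MeasurableSpace Ω] {μ : Measure Ω}

lemma ProbabilityTheory.HasSubgaussianMGF.measure_abs_ge_le [IsFiniteMeasure μ]
    {X : Ω → ℝ} {c : ℝ≥0} (h : HasSubgaussianMGF X c μ) {ε : ℝ} (hε : 0 ≤ ε) :
    μ.real {ω | ε ≤ |X ω|} ≤ 2 * exp (-ε ^ 2 / (2 * c)) := by
  have hsplit : {ω | ε ≤ |X ω|} ⊆ {ω | ε ≤ X ω} ∪ {ω | ε ≤ (-X) ω} := fun ω hω ↦ by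
    rcases le_abs'.mp (show ε ≤ |X ω| from hω) with h | h
    · exact Or.inr (by simp only [Set.mem_ofPred_eq, Pi.neg_apply]; linarith)
    · exact Or.inl h
  calc μ.real {ω | ε ≤ |X ω|}
      ≤ μ.real {ω | ε ≤ X ω} + μ.real {ω | ε ≤ (-X) ω} :=
        (measureReal_mono hsplit).trans (measureReal_union_le _ _)
    _ ≤ exp (-ε ^ 2 / (2 * c)) + exp (-ε ^ 2 / (2 * c)) :=
        add_le_add (h.measure_ge_le hε) (h.neg.measure_ge_le hε)
    _ = 2 * exp (-ε ^ 2 / (2 * c)) := by ring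

variable [IsProbabilityMeasure μ]

lemma hasSubgaussianMGF_sum_sub_integral_pi {Y : Ω → ℝ} (hY : AEMeasurable Y μ) {a b : ℝ}
    (hab : ∀ᵐ ω ∂μ, Y ω ∈ Set.Icc a b) (n : ℕ) :
    HasSubgaussianMGF (fun ωs : Fin n → Ω ↦ ∑ k, (Y (ωs k) - μ[Y]))
      (n * (‖b - a‖₊ / 2) ^ 2) (Measure.pi fun _ ↦ μ) := by
  have hcoord (k : Fin n) : HasSubgaussianMGF (fun ωs : Fin n → Ω ↦ Y (ωs k) - μ[Y])
      ((‖b - a‖₊ / 2) ^ 2) (Measure.pi fun _ ↦ μ) := by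
    refine HasSubgaussianMGF.of_map (X := fun ω ↦ Y ω - μ[Y]) (Y := fun ωs : Fin n → Ω ↦ ωs k)
      (measurable_pi_apply k).aemeasurable ?_
    rw [(measurePreserving_eval (fun _ ↦ μ) k).map_eq]
    exact hasSubgaussianMGF_of_mem_Icc hY hab
  have hindep := iIndepFun_pi (μ := fun _ : Fin n ↦ μ) (X := fun _ ω ↦ Y ω - μ[Y])
    fun _ ↦ hY.sub_const _
  simpa using HasSubgaussianMGF.sum_of_iIndepFun hindep (s := Finset.univ) fun k _ ↦ hcoord k

lemma measure_abs_sampleMean_sub_ge_le {Y : Ω → ℝ} (hY : AEMeasurable Y μ)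
    (hY01 : ∀ᵐ ω ∂μ, Y ω ∈ Set.Icc 0 1) {n : ℕ} (hn : 0 < n) {s : ℝ} (hs : 0 ≤ s) :
    (Measure.pi fun _ : Fin n ↦ μ).real {ωs | s ≤ |sampleMean n Y ωs - μ[Y]|} ≤
      2 * exp (-2 * n * s ^ 2) := by
  have hn' : (0 : ℝ) < n := Nat.cast_pos.mpr hn
  have hmean (ωs : Fin n → Ω) :
      sampleMean n Y ωs - μ[Y] = (1 / (n : ℝ)) * ∑ k, (Y (ωs k) - μ[Y]) := by
    rw [sampleMean, Finset.sum_sub_distrib, Finset.sum_const, Finset.card_univ,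
      Fintype.card_fin, nsmul_eq_mul]
    field_simp
  have hset : {ωs : Fin n → Ω | s ≤ |sampleMean n Y ωs - μ[Y]|} =
      {ωs | n * s ≤ |∑ k, (Y (ωs k) - μ[Y])|} := by
    ext ωs
    rw [Set.mem_ofPred_eq, Set.mem_ofPred_eq, hmean, abs_mul, abs_of_pos (by positivity),
      one_div, ← div_eq_inv_mul, le_div_iff₀' hn']
  rw [hset]
  refine ((hasSubgaussianMGF_sum_sub_integral_pi hY hY01 n).measure_abs_ge_le
    (by positivity)).trans_eq ?_
  congr 2
  norm_num
  field_simp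
  ring

end Hoeffding

section SampleCovariance

lemma sampleCov_apply {Ω q : Type*} [Fintype q] (n : ℕ) (W : Ω → q → ℝ) (ωs : Fin n → Ω)
    (z w : q) :
    sampleCov n W ωs z w = sampleMean n (fun ω ↦ W ω z * W ω w) ωs -
      sampleMean n (W · z) ωs * sampleMean n (W · w) ωs := by
  rcases eq_or_ne n 0 with rfl | hn
  · simp [sampleCov, sampleMean]
  simp only [sampleCov, sampleMean, sub_mul, mul_sub, Finset.sum_sub_distrib, ← Finset.sum_mul,
    ← Finset.mul_sum, Finset.sum_const, Finset.card_univ, Fintype.card_fin, nsmul_eq_mul]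
  field_simp
  ring

lemma abs_sampleMean_le_one {Ω : Type*} {n : ℕ} {Y : Ω → ℝ} (hY01 : ∀ ω, Y ω ∈ Set.Icc 0 1)
    (ωs : Fin n → Ω) : |sampleMean n Y ωs| ≤ 1 := by
  rcases eq_or_ne n 0 with rfl | hn
  · simp [sampleMean]
  rw [sampleMean, abs_of_nonneg (mul_nonneg (by positivity)
    (Finset.sum_nonneg fun k _ ↦ (hY01 (ωs k)).1))]
  calc (1 / (n : ℝ)) * ∑ k, Y (ωs k) ≤ (1 / (n : ℝ)) * n :=
        mul_le_mul_of_nonneg_left ((Finset.sum_le_card_nsmul _ _ 1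
          fun k _ ↦ (hY01 (ωs k)).2).trans_eq (by simp)) (by positivity)
    _ = 1 := by field_simp

lemma abs_sub_mul_sub_sub_mul_le {a y z a' y' z' : ℝ} (hy : |y| ≤ 1) (hz' : |z'| ≤ 1) :
    |(a - y * z) - (a' - y' * z')| ≤ |a - a'| + |y - y'| + |z - z'| := by
  have hy' : |y * (z - z')| ≤ |z - z'| := by
    rw [abs_mul]; exact mul_le_of_le_one_left (abs_nonneg _) hy
  have hz'' : |z' * (y - y')| ≤ |y - y'| := by
    rw [abs_mul]; exact mul_le_of_le_one_left (abs_nonneg _) hz'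
  calc |(a - y * z) - (a' - y' * z')| = |(a - a') - y * (z - z') - z' * (y - y')| := by
        congr 1; ring
    _ ≤ |a - a'| + |y * (z - z')| + |z' * (y - y')| :=
        (abs_sub _ _).trans (add_le_add_left (abs_sub _ _) _)
    _ ≤ |a - a'| + |y - y'| + |z - z'| := by linarith

variable {Ω : Type*} [MeasurableSpace Ω] {μ : Measure Ω} [IsProbabilityMeasure μ]

lemma measure_abs_sampleCov_sub_covRV_gt_le {q : Type*} [Fintype q] {W : Ω → q → ℝ}
    (hW : ∀ z, Measurable fun ω ↦ W ω z) (hW01 : ∀ ω z, W ω z ∈ Set.Icc 0 1)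
    {n : ℕ} (hn : 0 < n) {s : ℝ} (hs : 0 ≤ s) (z w : q) :
    (Measure.pi fun _ : Fin n ↦ μ).real
        {ωs | 3 * s < |sampleCov n W ωs z w - covRV μ (W · z) (W · w)|} ≤
      6 * exp (-2 * n * s ^ 2) := by
  have hdev {Y : Ω → ℝ} (hY : Measurable Y) (hY01 : ∀ ω, Y ω ∈ Set.Icc 0 1) :
      (Measure.pi fun _ : Fin n ↦ μ).real {ωs | s ≤ |sampleMean n Y ωs - μ[Y]|} ≤
        2 * exp (-2 * n * s ^ 2) :=
    measure_abs_sampleMean_sub_ge_le hY.aemeasurable (ae_of_all _ hY01) hn hs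
  have hprod01 (ω : Ω) : W ω z * W ω w ∈ Set.Icc 0 1 :=
    ⟨mul_nonneg (hW01 ω z).1 (hW01 ω w).1, mul_le_one₀ (hW01 ω z).2 (hW01 ω w).1 (hW01 ω w).2⟩
  have hintegral_le : |∫ ω, W ω w ∂μ| ≤ 1 := by
    simpa using norm_integral_le_of_norm_le_const (μ := μ) (f := (W · w)) (C := 1)
      (ae_of_all _ fun ω ↦ abs_le.mpr ⟨by linarith [(hW01 ω w).1], (hW01 ω w).2⟩)
  have hsub : {ωs | 3 * s < |sampleCov n W ωs z w - covRV μ (W · z) (W · w)|} ⊆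
      {ωs | s ≤ |sampleMean n (fun ω ↦ W ω z * W ω w) ωs - ∫ ω, W ω z * W ω w ∂μ|} ∪
        {ωs | s ≤ |sampleMean n (W · z) ωs - ∫ ω, W ω z ∂μ|} ∪
        {ωs | s ≤ |sampleMean n (W · w) ωs - ∫ ω, W ω w ∂μ|} := by
    intro ωs hωs
    by_contra hnot
    simp only [Set.mem_union, Set.mem_ofPred_eq, not_or, not_le] at hnot hωs
    rw [sampleCov_apply, covRV, expec, expec, expec] at hωs
    have hentry := abs_sub_mul_sub_sub_mul_le (a := sampleMean n (fun ω ↦ W ω z * W ω w) ωs)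
      (z := sampleMean n (W · w) ωs) (a' := ∫ ω, W ω z * W ω w ∂μ) (y' := ∫ ω, W ω z ∂μ)
      (abs_sampleMean_le_one (fun ω ↦ hW01 ω z) ωs) hintegral_le
    linarith
  calc _ ≤ _ := measureReal_mono hsub
    _ ≤ _ := (measureReal_union_le _ _).trans (add_le_add_left (measureReal_union_le _ _) _)
    _ ≤ 2 * exp (-2 * n * s ^ 2) + 2 * exp (-2 * n * s ^ 2) + 2 * exp (-2 * n * s ^ 2) :=
        add_le_add (add_le_add (hdev ((hW z).mul (hW w)) hprod01)
          (hdev (hW z) fun ω ↦ hW01 ω z)) (hdev (hW w) fun ω ↦ hW01 ω w)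
    _ = 6 * exp (-2 * n * s ^ 2) := by ring

lemma measure_exists_abs_sampleCov_sub_covRV_gt_le {q : Type*} [Fintype q]
    {W : Ω → q → ℝ} (hW : ∀ z, Measurable fun ω ↦ W ω z) (hW01 : ∀ ω z, W ω z ∈ Set.Icc 0 1)
    {n : ℕ} (hn : 0 < n) {s : ℝ} (hs : 0 ≤ s) :
    (Measure.pi fun _ : Fin n ↦ μ).real
        {ωs | ∃ z w, 3 * s < |sampleCov n W ωs z w - covRV μ (W · z) (W · w)|} ≤
      Fintype.card q ^ 2 * (6 * exp (-2 * n * s ^ 2)) := by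
  have hset : {ωs | ∃ z w, 3 * s < |sampleCov n W ωs z w - covRV μ (W · z) (W · w)|} =
      ⋃ zw : q × q, {ωs | 3 * s <
        |sampleCov n W ωs zw.1 zw.2 - covRV μ (W · zw.1) (W · zw.2)|} := by
    ext ωs
    simp only [Set.mem_ofPred_eq, Set.mem_iUnion, Prod.exists]
  rw [hset]
  refine (measureReal_iUnion_fintype_le _).trans ((Finset.sum_le_sum fun zw _ ↦
    measure_abs_sampleCov_sub_covRV_gt_le hW hW01 hn hs zw.1 zw.2).trans_eq ?_)
  simp only [Finset.sum_const, Finset.card_univ, Fintype.card_prod, nsmul_eq_mul]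
  push_cast
  ring

end SampleCovariance

lemma ofReal_one_sub_le_of_measureReal_compl_le {α : Type*} [MeasurableSpace α]
    {ν : Measure α} [IsProbabilityMeasure ν] {S : Set α} {δ : ℝ} (h : ν.real Sᶜ ≤ δ) :
    ENNReal.ofReal (1 - δ) ≤ ν S := by
  rw [← ofReal_measureReal]
  refine ENNReal.ofReal_le_ofReal ?_
  have hcover := measureReal_union_le (μ := ν) S Sᶜ
  rw [Set.union_compl_self, probReal_univ] at hcover
  linarith

lemma sq_mul_six_mul_exp_neg_log_le (p m : ℕ) (τ : ℝ) :
    ((p : ℝ) * m) ^ 2 * (6 * exp (-(log (6 * (m : ℝ) ^ 2) + τ * log p))) ≤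
      1 / (p : ℝ) ^ (τ - 2) := by
  rcases Nat.eq_zero_or_pos p with rfl | hp
  · rw [Nat.cast_zero, zero_mul, zero_pow two_ne_zero, zero_mul]
    positivity
  rcases Nat.eq_zero_or_pos m with rfl | hm
  · rw [Nat.cast_zero, mul_zero, zero_pow two_ne_zero, zero_mul]
    positivity
  have hp' : (0 : ℝ) < p := Nat.cast_pos.mpr hp
  rw [neg_add, exp_add, exp_neg, exp_neg, exp_log (by positivity), mul_comm τ,
    ← rpow_def_of_pos hp', rpow_sub hp', rpow_two]
  apply le_of_eq
  field_simp

/-- concentration of the sample indicator covariance matrix around the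
population one: for `τ > 2`, with probability at least `1 − 1/p^{τ−2}` over an i.i.d.
sample of size `n`, every entry of `Σ̂ − Σ` is bounded by
`(3/√2) √((log(6m²) + τ log p)/n)`. -/
theorem stmt10 {Ω : Type*} [MeasurableSpace Ω] (μ : MeasureTheory.Measure Ω)
    [MeasureTheory.IsProbabilityMeasure μ]
    (p m n : ℕ) (hn : 0 < n)
    (X : Ω → Fin p → Fin (m + 1)) (hX : ∀ k, Measurable fun ω => X ω k)
    (τ : ℝ) (hτ : 2 < τ) :
    ENNReal.ofReal (1 - 1 / (p : ℝ) ^ (τ - 2)) ≤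
      MeasureTheory.Measure.pi (fun _ : Fin n => μ)
        {ωs | ∀ z w : Fin p × Fin m,
          |sampleCov n (fun ω (z' : Fin p × Fin m) => Vfun (X ω z'.1) z'.2) ωs z w -
            covRV μ (fun ω => Vfun (X ω z.1) z.2) (fun ω => Vfun (X ω w.1) w.2)| ≤
          (3 / Real.sqrt 2) *
            Real.sqrt ((Real.log (6 * (m : ℝ) ^ 2) + τ * Real.log p) / n)} := by
  set L := log (6 * (m : ℝ) ^ 2) + τ * log p
  have hL : 0 ≤ L := add_nonneg (by exact_mod_cast log_natCast_nonneg (6 * m ^ 2))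
    (mul_nonneg (by linarith) (log_natCast_nonneg p))
  set s := √(L / n) / √2
  have hthreshold : 3 / √2 * √(L / n) = 3 * s := by ring
  have hexponent : -2 * n * s ^ 2 = -L := by
    rw [div_pow, sq_sqrt (by positivity), sq_sqrt zero_le_two]
    field_simp
  have hV01 (ω : Ω) (z : Fin p × Fin m) : Vfun (X ω z.1) z.2 ∈ Set.Icc 0 1 := by
    unfold Vfun; split_ifs <;> norm_num
  have hVmeas (z : Fin p × Fin m) : Measurable fun ω ↦ Vfun (X ω z.1) z.2 :=
    (measurable_of_countable fun x : Fin (m + 1) ↦ Vfun x z.2).comp (hX z.1)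
  apply ofReal_one_sub_le_of_measureReal_compl_le
  refine (measureReal_mono fun ωs hωs ↦ ?_).trans
    ((measure_exists_abs_sampleCov_sub_covRV_gt_le (μ := μ) (s := s) hVmeas hV01 hn
      (div_nonneg (sqrt_nonneg _) (sqrt_nonneg _))).trans ?_)
  · simp only [Set.mem_compl_iff, Set.mem_ofPred_eq, not_forall, not_le] at hωs
    rwa [hthreshold] at hωs
  · rw [hexponent, Fintype.card_prod, Fintype.card_fin, Fintype.card_fin, Nat.cast_mul]
    exact sq_mul_six_mul_exp_neg_log_le p m τ
end
end

section
/- Let A ∈ ℝ^{q×q} be symmetric positive definite with eigendecomposition A = D Σ_A Dᵀ, where D is orthogonal and Σ_A = diag(σ_1,...,σ_q) with σ_a > 0, and let B ∈ ℝ^{q×q} be symmetric. Then the unique minimizer over symmetric matrices Θ ∈ ℝ^{q×q} of the function Θ ↦ (1/2)⟨Θ², A⟩_F − ⟨Θ, B⟩_F is H(A,B) = D{(Dᵀ B D) ∘ C}Dᵀ, where C ∈ ℝ^{q×q} has entries C_{ab} = 2/(σ_a + σ_b) and ∘ denotes the Hadamard (entrywise) product. -/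
/-!
Conjugation by the orthogonal `D` leaves the loss `½⟨Θ², A⟩_F − ⟨Θ, B⟩_F` invariant and turns
`A` into `diag σ`. In the rotated variables `M = DᵀΘD`, `N = DᵀBD` the loss is
`∑_{a,b} (σ_a M_ab² / 2 − N_ab M_ab)`, and since `M` is symmetric `σ_a` may be replaced by the
average `(σ_a + σ_b)/2`. Completing the square entrywise with `H = N ∘ C`, i.e.
`N_ab = (σ_a + σ_b) H_ab / 2`, the loss is `∑ (σ_a + σ_b)/4 · (M_ab − H_ab)²` up to a constant,
a positive weighted sum of squares vanishing exactly at `M = H`.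
-/

open Matrix

noncomputable section

/-- The Frobenius inner product `⟨M, N⟩_F = tr(Mᵀ N)`. -/
def frobInner {q : Type*} [Fintype q] (M N : Matrix q q ℝ) : ℝ := (Mᵀ * N).trace

namespace DTrace

variable {n : Type*}

def coeff (σ : n → ℝ) : Matrix n n ℝ := of fun a b => 2 / (σ a + σ b)

lemma isSymm_hadamard_coeff {N : Matrix n n ℝ} (hN : N.IsSymm) (σ : n → ℝ) :
    (N ⊙ coeff σ).IsSymm :=
  IsSymm.ext fun a b => by simp only [hadamard_apply, coeff, of_apply, hN.apply, add_comm]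

variable [Fintype n]

def loss (A B Θ : Matrix n n ℝ) : ℝ := 1 / 2 * frobInner (Θ * Θ) A - frobInner Θ B

lemma isSymm_mul_mul_transpose {A : Matrix n n ℝ} (hA : A.IsSymm) (D : Matrix n n ℝ) :
    (D * A * Dᵀ).IsSymm := by
  simp only [IsSymm, transpose_mul, transpose_transpose, hA.eq, Matrix.mul_assoc]

lemma isSymm_transpose_mul_mul {A : Matrix n n ℝ} (hA : A.IsSymm) (D : Matrix n n ℝ) :
    (Dᵀ * A * D).IsSymm := by
  simpa only [transpose_transpose] using isSymm_mul_mul_transpose hA Dᵀ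

lemma frobInner_eq_sum (M N : Matrix n n ℝ) : frobInner M N = ∑ a, ∑ b, M a b * N a b := by
  rw [frobInner, trace_mul_comm, ← transpose_transpose N, ← sum_hadamard_eq]
  simp [hadamard_apply, mul_comm]

lemma sum_mul_sq_symm {M : Matrix n n ℝ} (hM : M.IsSymm) (w : n → ℝ) :
    ∑ a, ∑ b, w a * M a b ^ 2 = ∑ a, ∑ b, (w a + w b) / 2 * M a b ^ 2 := by
  have hswap : ∑ a, ∑ b, w a * M a b ^ 2 = ∑ a, ∑ b, w b * M a b ^ 2 := by
    rw [Finset.sum_comm]; simp only [hM.apply]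
  simp only [add_div, add_mul, Finset.sum_add_distrib, div_mul_eq_mul_div, ← Finset.sum_div,
    ← hswap]
  ring

variable [DecidableEq n]

lemma frobInner_conj {D : Matrix n n ℝ} (hD : D * Dᵀ = 1) (X Y : Matrix n n ℝ) :
    frobInner (Dᵀ * X * D) (Dᵀ * Y * D) = frobInner X Y := by
  have h : (Dᵀ * X * D)ᵀ * (Dᵀ * Y * D) = Dᵀ * (Xᵀ * Y * D) := by
    simp only [transpose_mul, transpose_transpose, Matrix.mul_assoc]
    rw [← Matrix.mul_assoc D, hD, Matrix.one_mul]
  rw [frobInner, frobInner, h, trace_mul_comm, Matrix.mul_assoc, hD, Matrix.mul_one]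

lemma conj_cancel_of_mul_transpose_eq_one {D : Matrix n n ℝ} (hD : D * Dᵀ = 1)
    (X : Matrix n n ℝ) :
    D * (Dᵀ * X * D) * Dᵀ = X := by
  simp only [Matrix.mul_assoc, hD, Matrix.mul_one]
  rw [← Matrix.mul_assoc, hD, Matrix.one_mul]

lemma conj_cancel_of_transpose_mul_eq_one {D : Matrix n n ℝ} (hD : Dᵀ * D = 1)
    (X : Matrix n n ℝ) :
    Dᵀ * (D * X * Dᵀ) * D = X := by
  simpa only [transpose_transpose] using
    conj_cancel_of_mul_transpose_eq_one (D := Dᵀ) (by rwa [transpose_transpose]) X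

lemma loss_conj {D : Matrix n n ℝ} (hD : D * Dᵀ = 1) (A B Θ : Matrix n n ℝ) :
    loss (Dᵀ * A * D) (Dᵀ * B * D) (Dᵀ * Θ * D) = loss A B Θ := by
  have hsq : (Dᵀ * Θ * D) * (Dᵀ * Θ * D) = Dᵀ * (Θ * Θ) * D := by
    simp only [Matrix.mul_assoc]; rw [← Matrix.mul_assoc D, hD, Matrix.one_mul]
  rw [loss, loss, hsq, frobInner_conj hD, frobInner_conj hD]

lemma frobInner_mul_self_diagonal {M : Matrix n n ℝ} (hM : M.IsSymm) (σ : n → ℝ) :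
    frobInner (M * M) (diagonal σ) = ∑ a, ∑ b, σ a * M a b ^ 2 := by
  rw [frobInner, transpose_mul, hM.eq, trace]
  refine Finset.sum_congr rfl fun a _ => ?_
  rw [diag_apply, mul_diagonal, mul_apply, Finset.sum_mul]
  refine Finset.sum_congr rfl fun b _ => ?_
  rw [hM.apply]; ring

lemma loss_diagonal_eq_sum {M : Matrix n n ℝ} (hM : M.IsSymm) (σ : n → ℝ) (N : Matrix n n ℝ) :
    loss (diagonal σ) N M = ∑ a, ∑ b, ((σ a + σ b) / 4 * M a b ^ 2 - N a b * M a b) := by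
  rw [loss, frobInner_mul_self_diagonal hM, sum_mul_sq_symm hM, frobInner_eq_sum]
  simp only [Finset.mul_sum, ← Finset.sum_sub_distrib]
  exact Finset.sum_congr rfl fun a _ => Finset.sum_congr rfl fun b _ => by ring

lemma loss_diagonal_sub_loss_hadamard_coeff {σ : n → ℝ} (hσ : ∀ a b, σ a + σ b ≠ 0)
    {N M : Matrix n n ℝ} (hN : N.IsSymm) (hM : M.IsSymm) :
    loss (diagonal σ) N M - loss (diagonal σ) N (N ⊙ coeff σ) =
      ∑ a, ∑ b, (σ a + σ b) / 4 * (M a b - (N ⊙ coeff σ) a b) ^ 2 := by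
  have hN_eq : ∀ a b, N a b = (σ a + σ b) / 2 * (N ⊙ coeff σ) a b := fun a b => by
    have := hσ a b
    simp only [hadamard_apply, coeff, of_apply]
    field_simp
  rw [loss_diagonal_eq_sum hM, loss_diagonal_eq_sum (isSymm_hadamard_coeff hN σ),
    ← Finset.sum_sub_distrib]
  refine Finset.sum_congr rfl fun a _ => ?_
  rw [← Finset.sum_sub_distrib]
  refine Finset.sum_congr rfl fun b _ => ?_
  rw [hN_eq a b]
  ring

lemma loss_diagonal_hadamard_coeff_le {σ : n → ℝ} (hσ : ∀ a, 0 < σ a)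
    {N M : Matrix n n ℝ} (hN : N.IsSymm) (hM : M.IsSymm) :
    loss (diagonal σ) N (N ⊙ coeff σ) ≤ loss (diagonal σ) N M := by
  rw [← sub_nonneg,
    loss_diagonal_sub_loss_hadamard_coeff (fun a b => (add_pos (hσ a) (hσ b)).ne') hN hM]
  exact Finset.sum_nonneg fun a _ => Finset.sum_nonneg fun b _ =>
    mul_nonneg (by linarith [hσ a, hσ b]) (sq_nonneg _)

lemma eq_hadamard_coeff_of_loss_diagonal_le {σ : n → ℝ} (hσ : ∀ a, 0 < σ a)
    {N M : Matrix n n ℝ} (hN : N.IsSymm) (hM : M.IsSymm)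
    (h : loss (diagonal σ) N M ≤ loss (diagonal σ) N (N ⊙ coeff σ)) :
    M = N ⊙ coeff σ := by
  have hw : ∀ a b, 0 < (σ a + σ b) / 4 := fun a b => by linarith [hσ a, hσ b]
  have hterm : ∀ a b, 0 ≤ (σ a + σ b) / 4 * (M a b - (N ⊙ coeff σ) a b) ^ 2 := fun a b =>
    mul_nonneg (hw a b).le (sq_nonneg _)
  have hzero := loss_diagonal_sub_loss_hadamard_coeff (fun a b => (add_pos (hσ a) (hσ b)).ne')
    hN hM
  rw [sub_eq_zero.2 (h.antisymm (loss_diagonal_hadamard_coeff_le hσ hN hM)), eq_comm,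
    Fintype.sum_eq_zero_iff_of_nonneg fun a => Finset.sum_nonneg fun b _ => hterm a b] at hzero
  ext a b
  have hab := congrFun ((Fintype.sum_eq_zero_iff_of_nonneg (hterm a)).1 (congrFun hzero a)) b
  exact sub_eq_zero.1 (pow_eq_zero_iff two_ne_zero |>.1 ((mul_eq_zero.1 hab).resolve_left
    (hw a b).ne'))

end DTrace

open DTrace in
/-- for `A = D Σ_A Dᵀ` symmetric positive definite (eigendecomposition with
`D` orthogonal and positive eigenvalues `σ`) and `B` symmetric, the unique minimizer of
`Θ ↦ (1/2)⟨Θ², A⟩_F − ⟨Θ, B⟩_F` over symmetric matrices is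
`H(A,B) = D {(Dᵀ B D) ∘ C} Dᵀ` with `C_{ab} = 2/(σ_a + σ_b)`. -/
theorem stmt13 (q : ℕ) (A B D : Matrix (Fin q) (Fin q) ℝ)
    (hD : D * Dᵀ = 1 ∧ Dᵀ * D = 1)
    (σ : Fin q → ℝ) (hσ : ∀ a, 0 < σ a)
    (hA : A = D * Matrix.diagonal σ * Dᵀ)
    (hB : B.IsSymm) :
    (D * Matrix.hadamard (Dᵀ * B * D) (Matrix.of fun a b => 2 / (σ a + σ b)) * Dᵀ).IsSymm ∧
    (∀ Θ : Matrix (Fin q) (Fin q) ℝ, Θ.IsSymm →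
      (1 / 2) * frobInner
          ((D * Matrix.hadamard (Dᵀ * B * D) (Matrix.of fun a b => 2 / (σ a + σ b)) * Dᵀ) *
           (D * Matrix.hadamard (Dᵀ * B * D) (Matrix.of fun a b => 2 / (σ a + σ b)) * Dᵀ)) A -
        frobInner (D * Matrix.hadamard (Dᵀ * B * D) (Matrix.of fun a b => 2 / (σ a + σ b)) * Dᵀ) B ≤
      (1 / 2) * frobInner (Θ * Θ) A - frobInner Θ B) ∧
    (∀ Θ : Matrix (Fin q) (Fin q) ℝ, Θ.IsSymm →
      (∀ Θ' : Matrix (Fin q) (Fin q) ℝ, Θ'.IsSymm →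
        (1 / 2) * frobInner (Θ * Θ) A - frobInner Θ B ≤
        (1 / 2) * frobInner (Θ' * Θ') A - frobInner Θ' B) →
      Θ = D * Matrix.hadamard (Dᵀ * B * D) (Matrix.of fun a b => 2 / (σ a + σ b)) * Dᵀ) := by
  obtain ⟨hDDt, hDtD⟩ := hD
  have hN := isSymm_transpose_mul_mul hB D
  have hloss : ∀ Θ, loss A B Θ = loss (diagonal σ) (Dᵀ * B * D) (Dᵀ * Θ * D) := fun Θ => by
    rw [← loss_conj hDDt A B Θ, hA, conj_cancel_of_transpose_mul_eq_one hDtD]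
  have hH_rot := conj_cancel_of_transpose_mul_eq_one hDtD ((Dᵀ * B * D) ⊙ coeff σ)
  have hH_symm := isSymm_mul_mul_transpose (isSymm_hadamard_coeff hN σ) D
  refine ⟨hH_symm, fun Θ hΘ => ?_, fun Θ hΘ hmin => ?_⟩
  · show loss A B (D * ((Dᵀ * B * D) ⊙ coeff σ) * Dᵀ) ≤ loss A B Θ
    rw [hloss, hloss, hH_rot]
    exact loss_diagonal_hadamard_coeff_le hσ hN (isSymm_transpose_mul_mul hΘ D)
  · have hle : loss A B Θ ≤ loss A B (D * ((Dᵀ * B * D) ⊙ coeff σ) * Dᵀ) := hmin _ hH_symm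
    rw [hloss, hloss, hH_rot] at hle
    rw [← conj_cancel_of_mul_transpose_eq_one hDDt Θ,
      eq_hadamard_coeff_of_loss_diagonal_le hσ hN (isSymm_transpose_mul_mul hΘ D) hle]
    rfl
end
end

section
/- Let A ∈ ℝ^{mp×mp} be symmetric, partitioned into p×p blocks of size m×m, and let λ ≥ 0. Then the unique minimizer over symmetric matrices Θ₀ ∈ ℝ^{mp×mp} of the function Θ₀ ↦ (1/2)‖Θ₀‖_F² − ⟨Θ₀, A⟩_F + λ Σ_{i≠j} ‖(Θ₀)_{[i,j]}‖_F is the matrix S(A,λ) given blockwise by: S(A,λ)_{[i,i]} = A_{[i,i]}; for i ≠ j, S(A,λ)_{[i,j]} = (1 − λ/‖A_{[i,j]}‖_F) A_{[i,j]} if ‖A_{[i,j]}‖_F > λ, and S(A,λ)_{[i,j]} = 0 if ‖A_{[i,j]}‖_F ≤ λ. -/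
/-!
The objective separates over the blocks: block `(i,j)` contributes
`½‖x‖² − ⟨x, A_{[i,j]}⟩ + λᵢⱼ ‖x‖`, with `λᵢⱼ = λ` off the diagonal and `λᵢᵢ = 0`.
Its minimiser is the vector soft-thresholding `s` of `a = A_{[i,j]}`: the residual `a − s` has
norm at most `λᵢⱼ` and inner product `λᵢⱼ ‖s‖` with `s`, i.e. it is a subgradient of `λᵢⱼ ‖·‖`
at `s`. As each block objective is `1`-strongly convex, summing over the blocks gives
`F(T) ≥ F(S(A,λ)) + ½‖T − S(A,λ)‖_F²` for every `T`, which yields minimality and uniqueness at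
once; `S(A,λ)` is symmetric because `A` is.
-/

open Matrix

noncomputable section

/-- The Frobenius norm of the `(i,j)`-th `m×m` block of a block matrix. -/
def blockNorm {p m : ℕ} (A : Matrix (Fin p × Fin m) (Fin p × Fin m) ℝ) (i j : Fin p) : ℝ :=
  Real.sqrt (∑ a : Fin m, ∑ b : Fin m, (A (i, a) (j, b)) ^ 2)

/-- The group-Lasso penalty `Σ_{i≠j} ‖Θ_{[i,j]}‖_F` over off-diagonal blocks. -/
def groupPenalty {p m : ℕ} (T : Matrix (Fin p × Fin m) (Fin p × Fin m) ℝ) : ℝ :=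
  ∑ i : Fin p, ∑ j : Fin p, if i = j then 0 else blockNorm T i j

/-- The blockwise soft-thresholding matrix `S(A, λ)`: diagonal blocks are kept, an
off-diagonal block is shrunk by the factor `1 − λ/‖A_{[i,j]}‖_F` if `‖A_{[i,j]}‖_F > λ`
and set to zero otherwise. -/
def softThresh {p m : ℕ} (A : Matrix (Fin p × Fin m) (Fin p × Fin m) ℝ) (lam : ℝ) :
    Matrix (Fin p × Fin m) (Fin p × Fin m) ℝ :=
  fun z w =>
    if z.1 = w.1 then A z w
    else if blockNorm A z.1 w.1 ≤ lam then 0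
    else (1 - lam / blockNorm A z.1 w.1) * A z w

open RealInnerProductSpace

section Shrink

variable {E : Type*} [NormedAddCommGroup E] [InnerProductSpace ℝ E]

def shrink (a : E) (lam : ℝ) : E :=
  if ‖a‖ ≤ lam then 0 else (1 - lam / ‖a‖) • a

def proxObjective (a : E) (lam : ℝ) (x : E) : ℝ :=
  1 / 2 * ‖x‖ ^ 2 - ⟪x, a⟫ + lam * ‖x‖

lemma shrink_zero (a : E) : shrink a 0 = a := by
  by_cases ha : ‖a‖ ≤ 0
  · simp [shrink, norm_le_zero_iff.mp ha]
  · simp [shrink, ha]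

lemma norm_sub_shrink_le (a : E) {lam : ℝ} (hlam : 0 ≤ lam) : ‖a - shrink a lam‖ ≤ lam := by
  by_cases ha : ‖a‖ ≤ lam
  · simp [shrink, ha]
  · have ha₀ : 0 < ‖a‖ := hlam.trans_lt (not_le.mp ha)
    have : a - (1 - lam / ‖a‖) • a = (lam / ‖a‖) • a := by rw [sub_smul, one_smul, sub_sub_cancel]
    rw [shrink, if_neg ha, this, norm_smul, Real.norm_of_nonneg (div_nonneg hlam ha₀.le),
      div_mul_cancel₀ _ ha₀.ne']

lemma inner_shrink_sub_shrink (a : E) {lam : ℝ} (hlam : 0 ≤ lam) :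
    ⟪shrink a lam, a - shrink a lam⟫ = lam * ‖shrink a lam‖ := by
  by_cases ha : ‖a‖ ≤ lam
  · simp [shrink, ha]
  · have ha₀ : 0 < ‖a‖ := hlam.trans_lt (not_le.mp ha)
    have hc : 0 ≤ 1 - lam / ‖a‖ := by rw [sub_nonneg, div_le_one ha₀]; exact (not_le.mp ha).le
    rw [shrink, if_neg ha, norm_smul, Real.norm_of_nonneg hc, inner_sub_right, real_inner_smul_left,
      real_inner_smul_left, real_inner_smul_right, real_inner_self_eq_norm_sq]
    field_simp
    ring

theorem proxObjective_shrink_add_le (a : E) {lam : ℝ} (hlam : 0 ≤ lam) (x : E) :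
    proxObjective a lam (shrink a lam) + 1 / 2 * ‖x - shrink a lam‖ ^ 2 ≤ proxObjective a lam x := by
  set s := shrink a lam
  have hs : ⟪s, a - s⟫ = lam * ‖s‖ := inner_shrink_sub_shrink a hlam
  have hx : ⟪x, a - s⟫ ≤ lam * ‖x‖ :=
    calc ⟪x, a - s⟫ ≤ ‖x‖ * ‖a - s‖ := real_inner_le_norm _ _
      _ ≤ ‖x‖ * lam := mul_le_mul_of_nonneg_left (norm_sub_shrink_le a hlam) (norm_nonneg x)
      _ = lam * ‖x‖ := mul_comm _ _
  rw [inner_sub_right, real_inner_self_eq_norm_sq] at hs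
  rw [inner_sub_right] at hx
  rw [proxObjective, proxObjective, norm_sub_sq_real]
  linarith

end Shrink

lemma frobInner_self_nonneg {q : Type*} [Fintype q] (M : Matrix q q ℝ) : 0 ≤ frobInner M M := by
  simpa [frobInner, conjTranspose_eq_transpose_of_trivial] using
    (posSemidef_conjTranspose_mul_self M).trace_nonneg

lemma frobInner_self_eq_zero_iff {q : Type*} [Fintype q] {M : Matrix q q ℝ} :
    frobInner M M = 0 ↔ M = 0 := by
  rw [frobInner, ← conjTranspose_eq_transpose_of_trivial, trace_conjTranspose_mul_self_eq_zero_iff]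

section Block

variable {p m : ℕ}

def block (T : Matrix (Fin p × Fin m) (Fin p × Fin m) ℝ) (i j : Fin p) :
    EuclideanSpace ℝ (Fin m × Fin m) :=
  WithLp.toLp 2 fun ab => T (i, ab.1) (j, ab.2)

lemma block_sub (T T' : Matrix (Fin p × Fin m) (Fin p × Fin m) ℝ) (i j : Fin p) :
    block (T - T') i j = block T i j - block T' i j := rfl

lemma blockNorm_eq_norm_block (T : Matrix (Fin p × Fin m) (Fin p × Fin m) ℝ) (i j : Fin p) :
    blockNorm T i j = ‖block T i j‖ := by
  simp [blockNorm, EuclideanSpace.norm_eq, block, Fintype.sum_prod_type]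

lemma frobInner_eq_sum_inner_block (T T' : Matrix (Fin p × Fin m) (Fin p × Fin m) ℝ) :
    frobInner T T' = ∑ i, ∑ j, ⟪block T i j, block T' i j⟫ := by
  simp only [frobInner, trace, diag_apply, mul_apply, transpose_apply]
  rw [Finset.sum_comm]
  simp only [block, PiLp.inner_apply, RCLike.inner_apply, conj_trivial, Fintype.sum_prod_type]
  refine Finset.sum_congr rfl fun i _ => ?_
  rw [Finset.sum_comm]
  simp only [mul_comm]

def groupLassoObjective (A : Matrix (Fin p × Fin m) (Fin p × Fin m) ℝ) (lam : ℝ)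
    (T : Matrix (Fin p × Fin m) (Fin p × Fin m) ℝ) : ℝ :=
  1 / 2 * frobInner T T - frobInner T A + lam * groupPenalty T

lemma groupLassoObjective_eq_sum_proxObjective (A : Matrix (Fin p × Fin m) (Fin p × Fin m) ℝ)
    (lam : ℝ) (T : Matrix (Fin p × Fin m) (Fin p × Fin m) ℝ) :
    groupLassoObjective A lam T =
      ∑ i, ∑ j, proxObjective (block A i j) (if i = j then 0 else lam) (block T i j) := by
  simp only [groupLassoObjective, proxObjective, groupPenalty, frobInner_eq_sum_inner_block,
    blockNorm_eq_norm_block, real_inner_self_eq_norm_sq, Finset.mul_sum, mul_ite, mul_zero, ite_mul,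
    zero_mul, Finset.sum_add_distrib, Finset.sum_sub_distrib]

lemma block_softThresh (A : Matrix (Fin p × Fin m) (Fin p × Fin m) ℝ) (lam : ℝ) (i j : Fin p) :
    block (softThresh A lam) i j = shrink (block A i j) (if i = j then 0 else lam) := by
  by_cases hij : i = j
  · subst hij
    rw [if_pos rfl, shrink_zero]
    ext ab
    simp [block, softThresh]
  · rw [if_neg hij, shrink, ← blockNorm_eq_norm_block]
    split_ifs with hb <;> ext ab <;> simp [block, softThresh, hij, hb]

theorem groupLassoObjective_softThresh_add_le (A : Matrix (Fin p × Fin m) (Fin p × Fin m) ℝ)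
    {lam : ℝ} (hlam : 0 ≤ lam) (T : Matrix (Fin p × Fin m) (Fin p × Fin m) ℝ) :
    groupLassoObjective A lam (softThresh A lam) +
        1 / 2 * frobInner (T - softThresh A lam) (T - softThresh A lam) ≤
      groupLassoObjective A lam T := by
  simp only [groupLassoObjective_eq_sum_proxObjective, frobInner_eq_sum_inner_block, block_sub,
    real_inner_self_eq_norm_sq, Finset.mul_sum, ← Finset.sum_add_distrib, block_softThresh]
  gcongr with i _ j _
  exact proxObjective_shrink_add_le _ (by split_ifs <;> simp [hlam]) _

lemma blockNorm_comm {A : Matrix (Fin p × Fin m) (Fin p × Fin m) ℝ} (hA : A.IsSymm) (i j : Fin p) :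
    blockNorm A j i = blockNorm A i j := by
  simp only [blockNorm]
  congr 1
  rw [Finset.sum_comm]
  simp only [hA.apply]

lemma isSymm_softThresh {A : Matrix (Fin p × Fin m) (Fin p × Fin m) ℝ} (hA : A.IsSymm) (lam : ℝ) :
    (softThresh A lam).IsSymm := by
  refine IsSymm.ext fun z w => ?_
  simp only [softThresh, eq_comm (a := w.1), blockNorm_comm hA w.1, hA.apply w z]

end Block

/-- the unique minimizer over symmetric matrices of
`Θ₀ ↦ (1/2)‖Θ₀‖_F² − ⟨Θ₀, A⟩_F + λ Σ_{i≠j} ‖(Θ₀)_{[i,j]}‖_F` is the blockwise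
soft-thresholding matrix `S(A, λ)`. -/
theorem stmt14 (p m : ℕ) (A : Matrix (Fin p × Fin m) (Fin p × Fin m) ℝ)
    (hA : A.IsSymm) (lam : ℝ) (hlam : 0 ≤ lam) :
    (softThresh A lam).IsSymm ∧
    (∀ T : Matrix (Fin p × Fin m) (Fin p × Fin m) ℝ, T.IsSymm →
      (1 / 2) * frobInner (softThresh A lam) (softThresh A lam) -
          frobInner (softThresh A lam) A + lam * groupPenalty (softThresh A lam) ≤
      (1 / 2) * frobInner T T - frobInner T A + lam * groupPenalty T) ∧
    (∀ T : Matrix (Fin p × Fin m) (Fin p × Fin m) ℝ, T.IsSymm →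
      (∀ T' : Matrix (Fin p × Fin m) (Fin p × Fin m) ℝ, T'.IsSymm →
        (1 / 2) * frobInner T T - frobInner T A + lam * groupPenalty T ≤
        (1 / 2) * frobInner T' T' - frobInner T' A + lam * groupPenalty T') →
      T = softThresh A lam) := by
  refine ⟨isSymm_softThresh hA lam, fun T _ => ?_, fun T _ hmin => ?_⟩
  · show groupLassoObjective A lam (softThresh A lam) ≤ groupLassoObjective A lam T
    linarith [groupLassoObjective_softThresh_add_le A hlam T,
      frobInner_self_nonneg (T - softThresh A lam)]
  · have hT : groupLassoObjective A lam T ≤ groupLassoObjective A lam (softThresh A lam) :=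
      hmin _ (isSymm_softThresh hA lam)
    have hdist : frobInner (T - softThresh A lam) (T - softThresh A lam) = 0 :=
      le_antisymm (by linarith [groupLassoObjective_softThresh_add_le A hlam T])
        (frobInner_self_nonneg _)
    exact sub_eq_zero.mp (frobInner_self_eq_zero_iff.mp hdist)
end
end
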